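/- arXiv:1909.04287 — 10 statements merged into one kernel-verified Lean document; each statement's English description precedes it below -/
import Mathlib

section
/- For any prime p ≥ 3, any integer k ≥ 2, and any α, β in the p-adic integers with |α - 1|_p < p^{-1/(p-1)} and |β - 1|_p < p^{-1/(p-1)}, there exists γ ∈ ℚ_p with |γ - 1|_p < p^{-1/(p-1)} such that ∑_{j=0}^{k-1} α^{k-j-1} β^j = k·γ. -/
/-!
Put `β = α t`; then the sum is `α ^ (k - 1) * (1 + t + ⋯ + t ^ (k - 1))`, and `α`, `t` lie in the
group of principal units `‖· - 1‖ < 1`. Writing `t = 1 + x`, the geometric sum is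
`∑ C(k, i + 1) x ^ i = k + ∑_{i ≥ 1} C(k, i + 1) x ^ i`. From `(i + 1) C(k, i + 1) = k C(k - 1, i)`
we get `‖C(k, i + 1)‖ ≤ ‖k‖ / ‖i + 1‖`, while `‖x‖ ^ i ≤ p ^ (-i) < 1 / (i + 1) ≤ ‖i + 1‖` since
`i + 1 < p ^ i` for `p ≥ 3`. So every term with `i ≥ 1` has norm `< ‖k‖`, and by the ultrametric
inequality the geometric sum is `k` times a principal unit.
-/

open Finset

lemma geom_sum_add_one_eq_sum_choose_mul_pow {R : Type*} [CommSemiring R] (x : R) (n : ℕ) :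
    ∑ j ∈ range n, (x + 1) ^ j = ∑ i ∈ range n, (n.choose (i + 1) : R) * x ^ i := by
  simpa [Polynomial.eval_finsetSum] using
    congrArg (Polynomial.eval x) (Polynomial.geom_sum_X_comp_X_add_one_eq_sum (R := R) n)

lemma sum_pow_mul_mul_pow {R : Type*} [CommSemiring R] (a t : R) (n : ℕ) :
    ∑ j ∈ range n, a ^ (n - j - 1) * (a * t) ^ j = a ^ (n - 1) * ∑ j ∈ range n, t ^ j := by
  rw [mul_sum]
  refine sum_congr rfl fun j hj => ?_
  rw [mul_pow, ← mul_assoc, ← pow_add]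
  have := mem_range.1 hj
  congr 2
  omega

lemma IsUltrametricDist.norm_sum_lt_of_forall_norm_lt {ι M : Type*} [SeminormedAddCommGroup M]
    [IsUltrametricDist M] {s : Finset ι} {f : ι → M} {C : ℝ} (hC : 0 < C)
    (h : ∀ i ∈ s, ‖f i‖ < C) : ‖∑ i ∈ s, f i‖ < C := by
  rcases s.eq_empty_or_nonempty with rfl | hs
  · simpa using hC
  · exact (hs.norm_sum_le_sup'_norm f).trans_lt ((sup'_lt_iff hs).2 h)

section PrincipalUnits

variable {K : Type*} [NormedField K] [IsUltrametricDist K]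

variable (K) in
/-- For `K = ℚ_[p]` with `p ≥ 3` this is the image `ℰ_p` of the `p`-adic exponential. -/
def principalUnits : Submonoid K where
  carrier := {a | ‖a - 1‖ < 1}
  one_mem' := by simp
  mul_mem' {a b} (ha : ‖a - 1‖ < 1) (hb : ‖b - 1‖ < 1) := by
    have ha' : ‖a‖ ≤ 1 := by
      simpa [ha.le] using IsUltrametricDist.norm_add_one_le_max_norm_one (a - 1)
    rw [Set.mem_ofPred_eq, show a * b - 1 = a * (b - 1) + (a - 1) by ring]
    refine (IsUltrametricDist.norm_add_le_max _ _).trans_lt (max_lt ?_ ha)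
    rw [norm_mul]
    exact (mul_le_of_le_one_left (norm_nonneg _) ha').trans_lt hb

@[simp]
lemma mem_principalUnits {a : K} : a ∈ principalUnits K ↔ ‖a - 1‖ < 1 := Iff.rfl

lemma norm_eq_one_of_mem_principalUnits {a : K} (ha : a ∈ principalUnits K) : ‖a‖ = 1 := by
  rw [mem_principalUnits] at ha
  simpa [ha.le] using
    IsUltrametricDist.norm_add_eq_max_of_norm_ne_norm (x := a - 1) (y := 1) (by simpa using ha.ne)

lemma ne_zero_of_mem_principalUnits {a : K} (ha : a ∈ principalUnits K) : a ≠ 0 :=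
  norm_ne_zero_iff.1 (by simp [norm_eq_one_of_mem_principalUnits ha])

lemma inv_mem_principalUnits {a : K} (ha : a ∈ principalUnits K) : a⁻¹ ∈ principalUnits K := by
  have := ne_zero_of_mem_principalUnits ha
  rw [mem_principalUnits, ← norm_neg, show -(a⁻¹ - 1) = (a - 1) * a⁻¹ by field_simp; ring]
  simpa [norm_eq_one_of_mem_principalUnits ha] using ha

lemma norm_natCast_choose_mul_pow_lt {x : K} {k i : ℕ} (hk : (k : K) ≠ 0)
    (hx : ‖x‖ ^ i < ‖((i + 1 : ℕ) : K)‖) : ‖(k.choose (i + 1) : K) * x ^ i‖ < ‖(k : K)‖ := by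
  obtain ⟨m, rfl⟩ := Nat.exists_eq_succ_of_ne_zero (n := k) (by rintro rfl; simp at hk)
  have hchoose :
      ‖(((m + 1).choose (i + 1) : ℕ) : K)‖ * ‖((i + 1 : ℕ) : K)‖ ≤ ‖((m + 1 : ℕ) : K)‖ := by
    rw [← norm_mul, ← Nat.cast_mul, ← Nat.add_one_mul_choose_eq, Nat.cast_mul, norm_mul]
    exact mul_le_of_le_one_right (norm_nonneg _) (IsUltrametricDist.norm_natCast_le_one K _)
  rw [norm_mul, norm_pow]
  rcases (norm_nonneg (((m + 1).choose (i + 1) : ℕ) : K)).eq_or_lt with h | h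
  · simpa [← h] using hk
  · exact (mul_lt_mul_of_pos_left hx h).trans_le hchoose

lemma norm_geom_sum_add_one_sub_natCast_lt {x : K} {k : ℕ} (hk : (k : K) ≠ 0)
    (hx : ∀ i, 1 ≤ i → ‖x‖ ^ i < ‖((i + 1 : ℕ) : K)‖) :
    ‖∑ j ∈ range k, (x + 1) ^ j - k‖ < ‖(k : K)‖ := by
  obtain ⟨m, rfl⟩ := Nat.exists_eq_succ_of_ne_zero (n := k) (by rintro rfl; simp at hk)
  rw [geom_sum_add_one_eq_sum_choose_mul_pow, sum_range_succ']
  simp only [zero_add, Nat.choose_one_right, pow_zero, mul_one, add_sub_cancel_right]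
  exact IsUltrametricDist.norm_sum_lt_of_forall_norm_lt (norm_pos_iff.2 hk)
    fun i _ => norm_natCast_choose_mul_pow_lt hk (hx (i + 1) (by omega))

lemma exists_eq_mul_mem_principalUnits {a b : K} (hb : b ≠ 0) (h : ‖a - b‖ < ‖b‖) :
    ∃ u ∈ principalUnits K, a = b * u :=
  ⟨a / b, by rwa [mem_principalUnits, div_sub_one hb, norm_div, div_lt_one (norm_pos_iff.2 hb)],
    (mul_div_cancel₀ a hb).symm⟩

end PrincipalUnits

lemma Nat.add_one_lt_pow_of_three_le {p i : ℕ} (hp : 3 ≤ p) (hi : 1 ≤ i) : i + 1 < p ^ i := by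
  obtain ⟨j, rfl⟩ := Nat.exists_eq_add_of_le' hi
  have := Nat.lt_pow_self (n := j) (by omega : 1 < p)
  rw [pow_succ]
  nlinarith

namespace Padic

variable {p : ℕ} [Fact p.Prime]

lemma norm_pow_lt_norm_natCast_add_one (hp : 3 ≤ p) {x : ℚ_[p]} (hx : ‖x‖ < 1) {i : ℕ}
    (hi : 1 ≤ i) : ‖x‖ ^ i < ‖((i + 1 : ℕ) : ℚ_[p])‖ := by
  have hxp : ‖x‖ ≤ ‖(p : ℚ_[p])‖ := by
    simpa using (norm_le_pow_iff_norm_lt_pow_add_one x (-1)).2 (by simpa using hx)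
  by_contra! h
  have hnorm : ‖(((i + 1 : ℕ) : ℤ) : ℚ_[p])‖ ≤ (p : ℝ) ^ (-i : ℤ) :=
    calc ‖(((i + 1 : ℕ) : ℤ) : ℚ_[p])‖ = ‖((i + 1 : ℕ) : ℚ_[p])‖ := by norm_cast
      _ ≤ ‖x‖ ^ i := h
      _ ≤ ‖(p : ℚ_[p])‖ ^ i := pow_le_pow_left₀ (norm_nonneg _) hxp i
      _ = (p : ℝ) ^ (-i : ℤ) := by rw [← norm_pow, norm_p_pow]
  have hdvd : p ^ i ∣ i + 1 := by exact_mod_cast (norm_int_le_pow_iff_dvd _ i).1 hnorm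
  have := Nat.le_of_dvd (Nat.succ_pos i) hdvd
  have := Nat.add_one_lt_pow_of_three_le hp hi
  omega

lemma exists_geom_sum_eq_natCast_mul_mem_principalUnits (hp : 3 ≤ p) {t : ℚ_[p]}
    (ht : t ∈ principalUnits ℚ_[p]) (k : ℕ) :
    ∃ u ∈ principalUnits ℚ_[p], ∑ j ∈ range k, t ^ j = k * u := by
  rcases eq_or_ne k 0 with rfl | hk
  · exact ⟨1, one_mem _, by simp⟩
  have hk' : (k : ℚ_[p]) ≠ 0 := Nat.cast_ne_zero.2 hk
  refine exists_eq_mul_mem_principalUnits hk' ?_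
  simpa using norm_geom_sum_add_one_sub_natCast_lt (x := t - 1) hk'
    fun i hi => norm_pow_lt_norm_natCast_add_one hp ht hi

end Padic

theorem padic_sum_eq_k_mul_gamma_general (p : ℕ) [Fact p.Prime] (hp : 3 ≤ p)
    (k : ℕ) (α β : ℚ_[p])
    (hα : ‖α - 1‖ < 1) (hβ : ‖β - 1‖ < 1) :
    ∃ γ : ℚ_[p], ‖γ - 1‖ < 1 ∧
      ∑ j ∈ Finset.range k, α ^ (k - j - 1) * β ^ j = (k : ℚ_[p]) * γ := by
  have hα : α ∈ principalUnits ℚ_[p] := hα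
  have ht : α⁻¹ * β ∈ principalUnits ℚ_[p] := mul_mem (inv_mem_principalUnits hα) hβ
  obtain ⟨u, hu, hsum⟩ := Padic.exists_geom_sum_eq_natCast_mul_mem_principalUnits hp ht k
  refine ⟨α ^ (k - 1) * u, mul_mem (pow_mem hα _) hu, ?_⟩
  rw [← mul_inv_cancel_left₀ (ne_zero_of_mem_principalUnits hα) β, sum_pow_mul_mul_pow, hsum]
  ring

theorem padic_sum_eq_k_mul_gamma (p : ℕ) [Fact p.Prime] (hp : 3 ≤ p)
    (k : ℕ) (hk : 2 ≤ k) (α β : ℚ_[p])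
    (hα : ‖α - 1‖ < 1) (hβ : ‖β - 1‖ < 1) :
    ∃ γ : ℚ_[p], ‖γ - 1‖ < 1 ∧
      ∑ j ∈ Finset.range k, α ^ (k - j - 1) * β ^ j = (k : ℚ_[p]) * γ :=
  padic_sum_eq_k_mul_gamma_general p hp k α β hα hβ
end

section
/- Let p ≥ 3 be prime and k ≥ 2 an integer. For any x ∈ ℤ_p^* with first canonical digit x₀ ∈ {1,...,p-1} (i.e. |x - x₀|_p < 1), one has |x^k - x₀^k|_p < |k|_p. -/
/-!
Write `x = y + t`; as norms in `ℚ_[p]` are powers of `p`, `‖t‖ < 1` means `‖t‖ ≤ p⁻¹`. In the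
binomial expansion of `x ^ k - y ^ k` the term of degree `j ≥ 1` in `t` carries the coefficient
`k.choose j`, whose norm is at most `‖k‖ * j` because `j * k.choose j = k * (k - 1).choose (j - 1)`
and `‖j‖⁻¹ ≤ j`. Since `j < p ^ j`, every term has norm below `‖k‖`, and so does their sum by the
ultrametric inequality.
-/

lemma pow_sub_pow_eq_sum_choose_mul_sub_pow {R : Type*} [CommRing R] (x y : R) (k : ℕ) :
    x ^ k - y ^ k =
      ∑ i ∈ Finset.range k, (k.choose (i + 1) : R) * (x - y) ^ (i + 1) * y ^ (k - (i + 1)) := by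
  conv_lhs => rw [← sub_add_cancel x y, add_pow, Finset.sum_range_succ']
  simp only [pow_zero, one_mul, Nat.sub_zero, Nat.choose_zero_right, Nat.cast_one, mul_one,
    add_sub_cancel_right]
  exact Finset.sum_congr rfl fun i _ ↦ by ring

namespace Padic

variable {p : ℕ} [Fact p.Prime]

lemma inv_norm_natCast_le {n : ℕ} (hn : n ≠ 0) : ‖(n : ℚ_[p])‖⁻¹ ≤ n := by
  rw [norm_eq_zpow_neg_valuation (Nat.cast_ne_zero.2 hn), valuation_natCast, zpow_neg, inv_inv,
    zpow_natCast]
  exact_mod_cast Nat.le_of_dvd (Nat.pos_of_ne_zero hn) pow_padicValNat_dvd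

lemma norm_choose_le_norm_mul (k : ℕ) {j : ℕ} (hj : j ≠ 0) :
    ‖(k.choose j : ℚ_[p])‖ ≤ ‖(k : ℚ_[p])‖ * j := by
  obtain ⟨i, rfl⟩ := Nat.exists_eq_succ_of_ne_zero hj
  obtain _ | n := k
  · simp
  have hchoose : ((n + 1 : ℕ) * n.choose i : ℚ_[p]) = ((n + 1).choose (i + 1) * (i + 1 : ℕ)) := by
    exact_mod_cast Nat.add_one_mul_choose_eq n i
  have hj' : ‖((i + 1 : ℕ) : ℚ_[p])‖ ≠ 0 := norm_ne_zero_iff.2 (Nat.cast_ne_zero.2 i.succ_ne_zero)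
  calc ‖((n + 1).choose (i + 1) : ℚ_[p])‖
      = ‖((n + 1 : ℕ) : ℚ_[p])‖ * ‖(n.choose i : ℚ_[p])‖ * ‖((i + 1 : ℕ) : ℚ_[p])‖⁻¹ := by
        rw [← norm_mul, hchoose, norm_mul, mul_inv_cancel_right₀ hj']
    _ ≤ ‖((n + 1 : ℕ) : ℚ_[p])‖ * 1 * (i + 1 : ℕ) := by
        gcongr
        · exact IsUltrametricDist.norm_natCast_le_one _ _
        · exact inv_norm_natCast_le i.succ_ne_zero
    _ = ‖((n + 1 : ℕ) : ℚ_[p])‖ * (i + 1 : ℕ) := by rw [mul_one]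

lemma norm_choose_mul_pow_lt_norm_natCast {t : ℚ_[p]} (ht : ‖t‖ < 1) {k j : ℕ} (hk : k ≠ 0)
    (hj : j ≠ 0) : ‖(k.choose j : ℚ_[p]) * t ^ j‖ < ‖(k : ℚ_[p])‖ := by
  have ht' : ‖t‖ ≤ (p : ℝ)⁻¹ := by
    simpa using (norm_le_pow_iff_norm_lt_pow_add_one t (-1)).2 (by simpa using ht)
  have hp : (0 : ℝ) < p := by exact_mod_cast (Fact.out : p.Prime).pos
  have hkpos : 0 < ‖(k : ℚ_[p])‖ := norm_pos_iff.2 (Nat.cast_ne_zero.2 hk)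
  have hj_lt : (j : ℝ) * (p : ℝ)⁻¹ ^ j < 1 := by
    rw [inv_pow, mul_inv_lt_iff₀ (by positivity), one_mul]
    exact_mod_cast Nat.lt_pow_self (Fact.out : p.Prime).one_lt
  calc ‖(k.choose j : ℚ_[p]) * t ^ j‖
      ≤ ‖(k : ℚ_[p])‖ * j * (p : ℝ)⁻¹ ^ j := by
        rw [norm_mul, norm_pow]
        gcongr
        exact norm_choose_le_norm_mul k hj
    _ = ‖(k : ℚ_[p])‖ * (j * (p : ℝ)⁻¹ ^ j) := mul_assoc _ _ _
    _ < ‖(k : ℚ_[p])‖ * 1 := mul_lt_mul_of_pos_left hj_lt hkpos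
    _ = ‖(k : ℚ_[p])‖ := mul_one _

theorem norm_pow_sub_pow_lt_norm_natCast {x y : ℚ_[p]} (hy : ‖y‖ ≤ 1) (hxy : ‖x - y‖ < 1)
    {k : ℕ} (hk : k ≠ 0) : ‖x ^ k - y ^ k‖ < ‖(k : ℚ_[p])‖ := by
  rw [pow_sub_pow_eq_sum_choose_mul_sub_pow]
  obtain ⟨i, -, hi⟩ := IsUltrametricDist.exists_norm_finsetSum_le_of_nonempty
    (Finset.nonempty_range_iff.2 hk)
    fun i ↦ (k.choose (i + 1) : ℚ_[p]) * (x - y) ^ (i + 1) * y ^ (k - (i + 1))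
  refine hi.trans_lt <|
    lt_of_le_of_lt ?_ (norm_choose_mul_pow_lt_norm_natCast hxy hk i.succ_ne_zero)
  rw [norm_mul _ (y ^ _), norm_pow]
  exact mul_le_of_le_one_right (norm_nonneg _) (pow_le_one₀ (norm_nonneg _) hy)

end Padic

theorem padic_pow_sub_digit_pow_general (p : ℕ) [Fact p.Prime]
    (k : ℕ) (hk : 2 ≤ k) (x : ℚ_[p])
    (x₀ : ℕ)
    (hclose : ‖x - (x₀ : ℚ_[p])‖ < 1) :
    ‖x ^ k - (x₀ : ℚ_[p]) ^ k‖ < ‖(k : ℚ_[p])‖ :=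
  Padic.norm_pow_sub_pow_lt_norm_natCast (IsUltrametricDist.norm_natCast_le_one _ _) hclose
    (by omega)

theorem padic_pow_sub_digit_pow (p : ℕ) [Fact p.Prime] (hp : 3 ≤ p)
    (k : ℕ) (hk : 2 ≤ k) (x : ℚ_[p]) (hx : ‖x‖ = 1)
    (x₀ : ℕ) (hx₀ : 1 ≤ x₀) (hx₀' : x₀ ≤ p - 1)
    (hclose : ‖x - (x₀ : ℚ_[p])‖ < 1) :
    ‖x ^ k - (x₀ : ℚ_[p]) ^ k‖ < ‖(k : ℚ_[p])‖ :=
  padic_pow_sub_digit_pow_general p k hk x x₀ hclose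
end

section
/- Let p ≥ 3 be prime and write k = m·p^s with gcd(m,p) = 1 and s ≥ 0. Let a ∈ ℤ_p^* with first digit a₀ (so 1 ≤ a₀ ≤ p-1 and |a - a₀|_p < 1). If there exists x ∈ ℤ_p^* with x^k = a, then |a - a₀^{p^s}|_p < p^{-s}. -/
/-!
Write `x ^ k = y ^ p ^ s` with `y = x ^ m`. By Fermat's little theorem `y ^ p ^ s ≡ y (mod p)`,
so `y ≡ a₀ (mod p)`, and raising a congruence mod `p` to the power `p ^ s` makes it a congruence
mod `p ^ (s + 1)`.
-/

namespace PadicInt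

variable {p : ℕ} [Fact p.Prime]

theorem dvd_sub_iff_toZMod_eq {x y : ℤ_[p]} : (p : ℤ_[p]) ∣ x - y ↔ toZMod x = toZMod y := by
  rw [← Ideal.mem_span_singleton, ← maximalIdeal_eq_span_p, ← ker_toZMod, RingHom.mem_ker,
    map_sub, sub_eq_zero]

theorem dvd_pow_prime_pow_sub_self (x : ℤ_[p]) (n : ℕ) : (p : ℤ_[p]) ∣ x ^ p ^ n - x := by
  rw [dvd_sub_iff_toZMod_eq, map_pow, ZMod.pow_card_pow]

theorem pow_prime_pow_sub_pow_dvd {y b : ℤ_[p]} {s : ℕ} (h : (p : ℤ_[p]) ∣ y ^ p ^ s - b) :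
    (p : ℤ_[p]) ^ (s + 1) ∣ y ^ p ^ s - b ^ p ^ s := by
  have hy : (p : ℤ_[p]) ∣ y - b := by
    simpa using dvd_sub h (dvd_pow_prime_pow_sub_self y s)
  exact dvd_sub_pow_of_dvd_sub hy s

theorem norm_lt_pow_neg_of_dvd {z : ℤ_[p]} {s : ℕ} (h : (p : ℤ_[p]) ^ (s + 1) ∣ z) :
    ‖z‖ < (p : ℝ) ^ (-(s : ℤ)) := by
  rw [norm_lt_pow_iff_norm_le_pow_sub_one,
    show -(s : ℤ) - 1 = -((s + 1 : ℕ) : ℤ) by push_cast; ring,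
    norm_le_pow_iff_mem_span_pow, Ideal.mem_span_singleton]
  exact h

end PadicInt

theorem padic_monomial_necessary_general (p : ℕ) [Fact p.Prime]
    (m s k : ℕ) (hkdef : k = m * p ^ s)
    (a : ℚ_[p])
    (a₀ : ℕ)
    (hclose : ‖a - (a₀ : ℚ_[p])‖ < 1)
    (hsol : ∃ x : ℚ_[p], ‖x‖ = 1 ∧ x ^ k = a) :
    ‖a - (a₀ : ℚ_[p]) ^ (p ^ s)‖ < (p : ℝ) ^ (-(s : ℤ)) := by
  obtain ⟨x, hx, rfl⟩ := hsol
  obtain ⟨x, rfl⟩ : ∃ y : ℤ_[p], (y : ℚ_[p]) = x := ⟨⟨x, hx.le⟩, rfl⟩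
  have hpow : x ^ k = (x ^ m) ^ p ^ s := by rw [← pow_mul, hkdef]
  have hresidue : (p : ℤ_[p]) ∣ (x ^ m) ^ p ^ s - a₀ := by
    rw [← hpow, ← PadicInt.norm_lt_one_iff_dvd]
    exact_mod_cast hclose
  have hlift := PadicInt.norm_lt_pow_neg_of_dvd (PadicInt.pow_prime_pow_sub_pow_dvd hresidue)
  rw [← hpow] at hlift
  exact_mod_cast hlift

theorem padic_monomial_necessary (p : ℕ) [Fact p.Prime] (hp : 3 ≤ p)
    (m s k : ℕ) (hm : Nat.Coprime m p) (hkdef : k = m * p ^ s)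
    (a : ℚ_[p]) (ha : ‖a‖ = 1)
    (a₀ : ℕ) (ha₀ : 1 ≤ a₀) (ha₀' : a₀ ≤ p - 1)
    (hclose : ‖a - (a₀ : ℚ_[p])‖ < 1)
    (hsol : ∃ x : ℚ_[p], ‖x‖ = 1 ∧ x ^ k = a) :
    ‖a - (a₀ : ℚ_[p]) ^ (p ^ s)‖ < (p : ℝ) ^ (-(s : ℤ)) :=
  padic_monomial_necessary_general p m s k hkdef a a₀ hclose hsol
end

section
/- Let p ≥ 3 be prime, k = m·p^s with gcd(m,p) = 1, s ≥ 0, and a ∈ ℤ_p^* with first digit a₀. Suppose |a - a₀^{p^s}|_p < p^{-s}. Then for every ξ ∈ {1,...,p-1} with |ξ^k - a|_p < 1, the equation x^k = a has exactly one solution x ∈ ℤ_p with |x - ξ|_p < 1. -/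
/-!
For odd `p`, lifting the exponent gives `‖x ^ n - y ^ n‖ = ‖n‖ * ‖x - y‖` whenever `x` and `y`
are congruent units mod `p`; hence `x ↦ x ^ k` is injective on the residue disc of `ξ`.
Conversely, Hensel's lemma extracts a `k`-th root near `1` of every `b` with `‖b - 1‖ < ‖k‖`,
one `p`-th root at a time and then an `m`-th root. By Fermat `ξ ^ m ≡ a₀ (mod p)`, so
`ξ ^ k ≡ a₀ ^ p ^ s ≡ a (mod p ^ (s + 1))`, i.e. `‖a - ξ ^ k‖ < ‖k‖`.
-/

theorem cube_dvd_one_add_mul_pow_sub_sub {R : Type*} [CommRing R] {p : ℕ} (hp : Odd p) (d : R) :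
    (p : R) ^ 3 ∣ (1 + p * d) ^ p - 1 - p ^ 2 * d := by
  have h := odd_sq_dvd_geom_sum₂_sub (R := R) 1 d hp
  simp only [one_pow, mul_one] at h
  have key : (1 + p * d) ^ p - 1 - p ^ 2 * d =
      (∑ i ∈ Finset.range p, (1 + p * d) ^ i - p) * (p * d) := by
    rw [← geom_sum_mul]; ring
  rw [key, pow_succ]
  exact mul_dvd_mul h (dvd_mul_right _ _)

namespace PadicInt

variable {p : ℕ} [Fact p.Prime]

theorem coe_inj {x y : ℤ_[p]} : (x : ℚ_[p]) = y ↔ x = y :=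
  ⟨ext, congrArg _⟩

theorem existsUnique_iff_existsUnique_coe {P : ℚ_[p] → Prop} :
    (∃! x : ℤ_[p], P x) ↔ ∃! x : ℚ_[p], ‖x‖ ≤ 1 ∧ P x := by
  constructor
  · rintro ⟨x, hx, huniq⟩
    exact ⟨x, ⟨x.2, hx⟩, fun y ⟨hy, hPy⟩ => congrArg Subtype.val (huniq ⟨y, hy⟩ hPy)⟩
  · rintro ⟨x, ⟨hx, hPx⟩, huniq⟩
    exact ⟨⟨x, hx⟩, hPx, fun y hy => Subtype.ext (huniq y ⟨y.2, hy⟩)⟩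

theorem norm_sub_lt_of_lt_of_lt {x y z : ℤ_[p]} {r : ℝ} (hxy : ‖x - y‖ < r)
    (hyz : ‖y - z‖ < r) : ‖x - z‖ < r :=
  sub_add_sub_cancel x y z ▸ (nonarchimedean _ _).trans_lt (max_lt hxy hyz)

theorem norm_p_pos : 0 < ‖(p : ℤ_[p])‖ := by
  simp [(Fact.out : p.Prime).pos]

theorem norm_p_lt_one : ‖(p : ℤ_[p])‖ < 1 :=
  norm_p (p := p) ▸ Padic.norm_p (p := p) ▸ Padic.norm_p_lt_one

theorem norm_eq_one_iff_not_dvd {x : ℤ_[p]} : ‖x‖ = 1 ↔ ¬ (p : ℤ_[p]) ∣ x := by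
  rw [← norm_lt_one_iff_dvd, not_lt, ← (norm_le_one x).ge_iff_eq]

theorem norm_natCast_eq_one_of_not_dvd {n : ℕ} (h : ¬ p ∣ n) : ‖(n : ℤ_[p])‖ = 1 :=
  norm_natCast_eq_one_iff.2 ((Nat.Prime.coprime_iff_not_dvd Fact.out).2 h)

theorem norm_eq_one_of_norm_sub_lt_one {x y : ℤ_[p]} (hxy : ‖x - y‖ < 1) (hy : ‖y‖ = 1) :
    ‖x‖ = 1 := by
  have := norm_add_eq_max_of_ne (q := x - y) (r := y) (by rw [hy]; exact hxy.ne)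
  rwa [sub_add_cancel, hy, max_eq_right hxy.le] at this

theorem norm_pow_prime_pow_sub_self_lt_one (x : ℤ_[p]) (s : ℕ) : ‖x ^ p ^ s - x‖ < 1 := by
  rw [← mem_nonunits, ← IsLocalRing.mem_maximalIdeal, ← ker_toZMod, RingHom.mem_ker, map_sub,
    map_pow, ZMod.pow_card_pow, sub_self]

section LiftingTheExponent

variable {x y : ℤ_[p]}

theorem norm_pow_sub_pow_of_not_dvd (hxy : ‖x - y‖ < 1) (hy : ‖y‖ = 1) {n : ℕ}
    (hn : ¬ p ∣ n) : ‖x ^ n - y ^ n‖ = ‖x - y‖ := by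
  rw [← geom_sum₂_mul, norm_mul, norm_eq_one_iff_not_dvd.2, one_mul]
  refine not_dvd_geom_sum₂ prime_p ((norm_lt_one_iff_dvd _).1 hxy)
    (norm_eq_one_iff_not_dvd.1 (norm_eq_one_of_norm_sub_lt_one hxy hy)) ?_
  rwa [← norm_lt_one_iff_dvd, norm_natCast_lt_one_iff]

theorem norm_pow_prime_sub_pow_prime (hp : Odd p) (hxy : ‖x - y‖ < 1) (hy : ‖y‖ = 1) :
    ‖x ^ p - y ^ p‖ = ‖(p : ℤ_[p])‖ * ‖x - y‖ := by
  rw [← geom_sum₂_mul, norm_mul]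
  congr 1
  have hmult := emultiplicity_geom_sum₂_eq_one prime_p hp ((norm_lt_one_iff_dvd _).1 hxy)
    (norm_eq_one_iff_not_dvd.1 (norm_eq_one_of_norm_sub_lt_one hxy hy))
  obtain ⟨⟨c, hc⟩, hsq⟩ := emultiplicity_eq_coe.1 (hmult.trans Nat.cast_one.symm)
  rw [pow_one] at hc
  rw [hc, norm_mul, (norm_eq_one_iff_not_dvd (x := c)).2, mul_one]
  rintro ⟨d, rfl⟩
  exact hsq ⟨d, by rw [hc]; ring⟩

theorem norm_pow_sub_pow (hp : Odd p) (hxy : ‖x - y‖ < 1) (hy : ‖y‖ = 1) (n : ℕ) :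
    ‖x ^ n - y ^ n‖ = ‖(n : ℤ_[p])‖ * ‖x - y‖ := by
  induction n using Nat.strong_induction_on generalizing x y with
  | _ n ih =>
  rcases eq_or_ne n 0 with rfl | hn0
  · simp
  by_cases hpn : p ∣ n
  · obtain ⟨n, rfl⟩ := hpn
    have hn : n < p * n := lt_mul_left (Nat.pos_of_ne_zero (right_ne_zero_of_mul hn0))
      (Fact.out : p.Prime).one_lt
    have hxyp := norm_pow_prime_sub_pow_prime hp hxy hy
    have hxyp_lt : ‖x ^ p - y ^ p‖ < 1 := by
      rw [hxyp]
      exact (mul_le_of_le_one_left (norm_nonneg _) (norm_le_one _)).trans_lt hxy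
    rw [pow_mul, pow_mul, ih n hn hxyp_lt (by rw [norm_pow, hy, one_pow]), hxyp, Nat.cast_mul,
      norm_mul, mul_assoc, mul_left_comm]
  · rw [norm_pow_sub_pow_of_not_dvd hxy hy hpn, norm_natCast_eq_one_of_not_dvd hpn, one_mul]

theorem eq_of_pow_eq_pow (hp : Odd p) {n : ℕ} (hn : n ≠ 0) (hxy : ‖x - y‖ < 1) (hy : ‖y‖ = 1)
    (h : x ^ n = y ^ n) : x = y := by
  have := norm_pow_sub_pow hp hxy hy n
  rw [h, sub_self, norm_zero, eq_comm, mul_eq_zero, norm_eq_zero, norm_eq_zero, Nat.cast_eq_zero,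
    sub_eq_zero] at this
  exact this.resolve_left hn

end LiftingTheExponent

section Roots

theorem exists_pow_eq_of_not_dvd {n : ℕ} (hn : ¬ p ∣ n) {b : ℤ_[p]} (hb : ‖b - 1‖ < 1) :
    ∃ u : ℤ_[p], ‖u - 1‖ < 1 ∧ u ^ n = b := by
  set F : Polynomial ℤ_[p] := .X ^ n - .C b
  have hF' : ‖F.derivative.aeval (1 : ℤ_[p])‖ = 1 := by
    simpa [F, Polynomial.derivative_X_pow] using norm_natCast_eq_one_of_not_dvd (p := p) hn
  have hnorm : ‖F.aeval (1 : ℤ_[p])‖ < ‖F.derivative.aeval (1 : ℤ_[p])‖ ^ 2 := by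
    rw [hF']
    simpa [F, norm_sub_rev] using hb
  obtain ⟨u, hu, hu1, -⟩ := hensels_lemma hnorm
  exact ⟨u, hF' ▸ hu1, by simpa [F, sub_eq_zero] using hu⟩

/-- Hensel's lemma cannot start at `1` when `‖b - 1‖ = ‖p‖ ^ 2`. For `b = 1 + p ^ 2 * e` the start
`1 + p * e` is correct up to `p ^ 3` instead; this is where `p` must be odd. -/
theorem exists_pow_prime_eq (hp : Odd p) {b : ℤ_[p]} (hb : ‖b - 1‖ < ‖(p : ℤ_[p])‖) :
    ∃ v : ℤ_[p], ‖v - 1‖ < 1 ∧ v ^ p = b := by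
  obtain ⟨e, he⟩ : (p : ℤ_[p]) ^ 2 ∣ b - 1 := by
    rw [← Ideal.mem_span_singleton, ← norm_le_pow_iff_mem_span_pow]
    rw [norm_p, ← zpow_neg_one, norm_lt_pow_iff_norm_le_pow_sub_one] at hb
    simpa using hb
  set x₀ : ℤ_[p] := 1 + p * e
  have hx₀ : ‖x₀ - 1‖ < 1 := by
    simpa [x₀] using
      (mul_le_of_le_one_right (norm_nonneg _) (norm_le_one e)).trans_lt (norm_p_lt_one (p := p))
  set F : Polynomial ℤ_[p] := .X ^ p - .C b
  have hF : F.aeval x₀ = (1 + p * e) ^ p - 1 - p ^ 2 * e := by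
    simp only [F, map_sub, map_pow, Polynomial.aeval_X, Polynomial.aeval_C,
      Algebra.algebraMap_self, RingHom.id_apply, eq_add_of_sub_eq' he]
    ring
  have hF' : ‖F.derivative.aeval x₀‖ = ‖(p : ℤ_[p])‖ := by
    simp [F, Polynomial.derivative_X_pow, norm_eq_one_of_norm_sub_lt_one hx₀ norm_one]
  have hnorm : ‖F.aeval x₀‖ < ‖F.derivative.aeval x₀‖ ^ 2 := by
    obtain ⟨c, hc⟩ := cube_dvd_one_add_mul_pow_sub_sub hp e
    rw [hF, hF', hc, norm_mul, norm_pow]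
    calc ‖(p : ℤ_[p])‖ ^ 3 * ‖c‖ ≤ ‖(p : ℤ_[p])‖ ^ 3 :=
          mul_le_of_le_one_right (by positivity) (norm_le_one c)
      _ < ‖(p : ℤ_[p])‖ ^ 2 := pow_lt_pow_right_of_lt_one₀ norm_p_pos norm_p_lt_one (by norm_num)
  obtain ⟨v, hv, hvx₀, -⟩ := hensels_lemma hnorm
  refine ⟨v, norm_sub_lt_of_lt_of_lt (hvx₀.trans (hF' ▸ norm_p_lt_one)) hx₀, ?_⟩
  simpa [F, sub_eq_zero] using hv

theorem exists_pow_prime_pow_eq (hp : Odd p) (s : ℕ) {b : ℤ_[p]}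
    (hb : ‖b - 1‖ < ‖(p : ℤ_[p]) ^ s‖) : ∃ v : ℤ_[p], ‖v - 1‖ < 1 ∧ v ^ p ^ s = b := by
  induction s generalizing b with
  | zero => exact ⟨b, by simpa using hb, pow_one b⟩
  | succ s ih =>
    rw [pow_succ', norm_mul] at hb
    obtain ⟨w, hw, rfl⟩ := exists_pow_prime_eq hp
      (hb.trans_le (mul_le_of_le_one_right (norm_nonneg _) (norm_le_one _)))
    rw [← one_pow p, norm_pow_sub_pow hp hw norm_one] at hb
    obtain ⟨v, hv, rfl⟩ := ih (lt_of_mul_lt_mul_left hb (norm_nonneg _))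
    exact ⟨v, hv, by rw [pow_succ, pow_mul]⟩

theorem exists_pow_eq (hp : Odd p) {k : ℕ} {b : ℤ_[p]} (hb : ‖b - 1‖ < ‖(k : ℤ_[p])‖) :
    ∃ u : ℤ_[p], ‖u - 1‖ < 1 ∧ u ^ k = b := by
  have hk : k ≠ 0 := Nat.cast_ne_zero.1 (norm_pos_iff.1 ((norm_nonneg _).trans_lt hb))
  obtain ⟨e, m, hm, rfl⟩ := Nat.exists_eq_pow_mul_and_not_dvd hk p (Fact.out : p.Prime).ne_one
  rw [Nat.cast_mul, Nat.cast_pow, norm_mul, norm_natCast_eq_one_of_not_dvd hm, mul_one] at hb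
  obtain ⟨v, hv, rfl⟩ := exists_pow_prime_pow_eq hp e hb
  obtain ⟨u, hu, rfl⟩ := exists_pow_eq_of_not_dvd hm hv
  exact ⟨u, hu, by rw [← pow_mul, mul_comm]⟩

theorem existsUnique_pow_eq (hp : Odd p) {k : ℕ} {y b : ℤ_[p]} (hy : ‖y‖ = 1)
    (hb : ‖b - y ^ k‖ < ‖(k : ℤ_[p])‖) : ∃! x : ℤ_[p], ‖x - y‖ < 1 ∧ x ^ k = b := by
  obtain ⟨u, rfl⟩ := isUnit_iff.2 hy
  refine existsUnique_of_exists_of_unique ?_ ?_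
  · have hbu : b * ↑u⁻¹ ^ k - 1 = (b - u ^ k) * ↑u⁻¹ ^ k := by
      rw [sub_mul, ← mul_pow, Units.mul_inv, one_pow]
    obtain ⟨v, hv, hvk⟩ := exists_pow_eq hp (b := b * ↑u⁻¹ ^ k)
      (by rwa [hbu, norm_mul, norm_pow, norm_units, one_pow, mul_one])
    refine ⟨u * v, ?_, ?_⟩
    · rwa [← mul_sub_one, norm_mul, norm_units, one_mul]
    · rw [mul_pow, hvk, mul_left_comm, ← mul_pow, Units.mul_inv, one_pow, mul_one]
  · rintro x₁ x₂ ⟨hx₁, rfl⟩ ⟨hx₂, hx₂k⟩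
    have hk : k ≠ 0 := Nat.cast_ne_zero.1 (norm_pos_iff.1 ((norm_nonneg _).trans_lt hb))
    exact eq_of_pow_eq_pow hp hk (norm_sub_lt_of_lt_of_lt hx₁ (norm_sub_rev x₂ _ ▸ hx₂))
      (norm_eq_one_of_norm_sub_lt_one hx₂ hy) hx₂k.symm

end Roots

end PadicInt

theorem padic_monomial_unique_in_ball_general (p : ℕ) [Fact p.Prime] (hp : 3 ≤ p)
    (m s k : ℕ) (hm : Nat.Coprime m p) (hkdef : k = m * p ^ s)
    (a : ℚ_[p]) (ha : ‖a‖ = 1)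
    (a₀ : ℕ)
    (hclose : ‖a - (a₀ : ℚ_[p])‖ < 1)
    (hcond : ‖a - (a₀ : ℚ_[p]) ^ (p ^ s)‖ < (p : ℝ) ^ (-(s : ℤ))) :
    ∀ ξ : ℕ, 1 ≤ ξ → ξ ≤ p - 1 → ‖(ξ : ℚ_[p]) ^ k - a‖ < 1 →
      ∃! x : ℚ_[p], ‖x‖ ≤ 1 ∧ ‖x - (ξ : ℚ_[p])‖ < 1 ∧ x ^ k = a := by
  intro ξ hξ hξp hξk
  have hodd : Odd p := (Fact.out : p.Prime).odd_of_ne_two (by omega)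
  obtain ⟨A, rfl⟩ : ∃ A : ℤ_[p], (A : ℚ_[p]) = a := ⟨⟨a, ha.le⟩, rfl⟩
  rw [← PadicInt.existsUnique_iff_existsUnique_coe]
  simp only [← PadicInt.coe_natCast, ← PadicInt.coe_pow, ← PadicInt.coe_sub,
    PadicInt.padic_norm_e_of_padicInt, PadicInt.coe_inj] at hclose hcond hξk ⊢
  have hξ1 : ‖(ξ : ℤ_[p])‖ = 1 :=
    PadicInt.norm_natCast_eq_one_of_not_dvd (Nat.not_dvd_of_pos_of_lt hξ (by omega))
  have hk : ‖(k : ℤ_[p])‖ = ‖(p : ℤ_[p]) ^ s‖ := by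
    rw [hkdef, Nat.cast_mul, Nat.cast_pow, norm_mul, PadicInt.norm_natCast_eq_one_of_not_dvd
      ((Nat.Prime.coprime_iff_not_dvd Fact.out).1 hm.symm), one_mul]
  have hξm : ‖(a₀ : ℤ_[p]) - ξ ^ m‖ < 1 := by
    refine PadicInt.norm_sub_lt_of_lt_of_lt (norm_sub_rev A _ ▸ hclose)
      (PadicInt.norm_sub_lt_of_lt_of_lt (norm_sub_rev _ A ▸ hξk) ?_)
    rw [hkdef, pow_mul]
    exact PadicInt.norm_pow_prime_pow_sub_self_lt_one _ s
  have hlift : ‖(a₀ : ℤ_[p]) ^ p ^ s - (ξ : ℤ_[p]) ^ k‖ < ‖(k : ℤ_[p])‖ := by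
    rw [hkdef, pow_mul, PadicInt.norm_pow_sub_pow hodd hξm (by rw [norm_pow, hξ1, one_pow]),
      ← hkdef, hk, Nat.cast_pow]
    exact mul_lt_of_lt_one_right (by rw [norm_pow]; exact pow_pos PadicInt.norm_p_pos s) hξm
  rw [← PadicInt.norm_p_pow, ← hk] at hcond
  exact PadicInt.existsUnique_pow_eq hodd hξ1 (PadicInt.norm_sub_lt_of_lt_of_lt hcond hlift)

theorem padic_monomial_unique_in_ball (p : ℕ) [Fact p.Prime] (hp : 3 ≤ p)
    (m s k : ℕ) (hm : Nat.Coprime m p) (hkdef : k = m * p ^ s)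
    (a : ℚ_[p]) (ha : ‖a‖ = 1)
    (a₀ : ℕ) (ha₀ : 1 ≤ a₀) (ha₀' : a₀ ≤ p - 1)
    (hclose : ‖a - (a₀ : ℚ_[p])‖ < 1)
    (hcond : ‖a - (a₀ : ℚ_[p]) ^ (p ^ s)‖ < (p : ℝ) ^ (-(s : ℤ))) :
    ∀ ξ : ℕ, 1 ≤ ξ → ξ ≤ p - 1 → ‖(ξ : ℚ_[p]) ^ k - a‖ < 1 →
      ∃! x : ℚ_[p], ‖x‖ ≤ 1 ∧ ‖x - (ξ : ℚ_[p])‖ < 1 ∧ x ^ k = a :=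
  padic_monomial_unique_in_ball_general p hp m s k hm hkdef a ha a₀ hclose hcond
end

section
/- Let p ≥ 3 be prime, k ≥ 1 an integer, and a ∈ ℚ_p with |a - 1|_p < 1 (i.e. a ∈ ℰ_p). If |k|_p ≤ |a - 1|_p, then the equation x^k = a has no solution in ℚ_p. -/
/-!
Write `k = p ^ v * m` with `p ∤ m`, so that `‖k‖ = p ^ (-v)`, and put `w = x ^ m`, a `p`-adic
integer with `w ^ (p ^ v) = a ≡ 1 (mod p)`. Frobenius is the identity on `𝔽_p`, so already
`w ≡ 1 (mod p)`, and then `w ^ (p ^ v) ≡ 1 (mod p ^ (v + 1))`. Hence `‖a - 1‖ ≤ p ^ (-v - 1) < ‖k‖`.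
-/

namespace PadicInt

variable {p : ℕ} [Fact p.Prime]

theorem dvd_iff_toZMod_eq_zero {z : ℤ_[p]} : (p : ℤ_[p]) ∣ z ↔ toZMod z = 0 := by
  rw [← RingHom.mem_ker, ker_toZMod, maximalIdeal_eq_span_p, Ideal.mem_span_singleton]

theorem dvd_sub_one_of_dvd_pow_prime_pow_sub_one {w : ℤ_[p]} {v : ℕ}
    (h : (p : ℤ_[p]) ∣ w ^ p ^ v - 1) : (p : ℤ_[p]) ∣ w - 1 := by
  rw [dvd_iff_toZMod_eq_zero, map_sub, map_pow, ZMod.pow_card_pow, ← map_sub] at h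
  rwa [dvd_iff_toZMod_eq_zero]

theorem pow_succ_dvd_pow_prime_pow_sub_one {w : ℤ_[p]} {v : ℕ}
    (h : (p : ℤ_[p]) ∣ w ^ p ^ v - 1) : (p : ℤ_[p]) ^ (v + 1) ∣ w ^ p ^ v - 1 := by
  simpa using dvd_sub_pow_of_dvd_sub (dvd_sub_one_of_dvd_pow_prime_pow_sub_one h) v

theorem norm_pow_sub_one_lt_norm_natCast {w : ℤ_[p]} {k : ℕ} (hk : k ≠ 0)
    (h : ‖w ^ k - 1‖ < 1) : ‖w ^ k - 1‖ < ‖(k : ℤ_[p])‖ := by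
  obtain ⟨v, m, hpm, rfl⟩ := Nat.exists_eq_pow_mul_and_not_dvd hk p (Fact.out : p.Prime).ne_one
  rw [mul_comm (p ^ v) m, pow_mul] at h ⊢
  have hdvd := pow_succ_dvd_pow_prime_pow_sub_one ((norm_lt_one_iff_dvd _).mp h)
  have hm : ‖(m : ℤ_[p])‖ = 1 :=
    norm_natCast_eq_one_iff.mpr ((Nat.Prime.coprime_iff_not_dvd Fact.out).mpr hpm)
  calc ‖(w ^ m) ^ p ^ v - 1‖ ≤ (p : ℝ) ^ (-(v + 1 : ℕ) : ℤ) :=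
        (norm_le_pow_iff_mem_span_pow _ _).mpr (Ideal.mem_span_singleton.mpr hdvd)
    _ < (p : ℝ) ^ (-v : ℤ) :=
        zpow_lt_zpow_right₀ (mod_cast (Fact.out : p.Prime).one_lt) (by omega)
    _ = ‖((m * p ^ v : ℕ) : ℤ_[p])‖ := by
        push_cast
        rw [norm_mul, hm, one_mul, norm_p_pow]

end PadicInt

theorem IsUltrametricDist.norm_le_one_of_norm_pow_sub_one_lt_one {K : Type*}
    [NormedDivisionRing K] [IsUltrametricDist K] {x : K} {k : ℕ} (hk : k ≠ 0)
    (h : ‖x ^ k - 1‖ < 1) : ‖x‖ ≤ 1 := by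
  have hxk : ‖x ^ k‖ ≤ 1 := by
    simpa using (IsUltrametricDist.norm_add_le_max (x ^ k - 1) 1).trans (max_le h.le norm_one.le)
  rwa [norm_pow, pow_le_one_iff_of_nonneg (norm_nonneg x) hk] at hxk

theorem Padic.norm_pow_sub_one_lt_norm_natCast {p : ℕ} [Fact p.Prime] {x : ℚ_[p]} {k : ℕ}
    (hk : k ≠ 0) (h : ‖x ^ k - 1‖ < 1) : ‖x ^ k - 1‖ < ‖(k : ℚ_[p])‖ := by
  have hx := IsUltrametricDist.norm_le_one_of_norm_pow_sub_one_lt_one hk h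
  -- the norm on `ℤ_[p]` is that of `ℚ_[p]`, so this is definitionally the claim about `x`
  exact PadicInt.norm_pow_sub_one_lt_norm_natCast (w := ⟨x, hx⟩) hk h

theorem padic_monomial_no_solution_general (p : ℕ) [Fact p.Prime]
    (k : ℕ) (hk : 1 ≤ k) (a : ℚ_[p]) (ha : ‖a - 1‖ < 1)
    (hka : ‖(k : ℚ_[p])‖ ≤ ‖a - 1‖) :
    ¬ ∃ x : ℚ_[p], x ^ k = a := by
  rintro ⟨x, rfl⟩
  exact (Padic.norm_pow_sub_one_lt_norm_natCast (by omega) ha).not_ge hka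

theorem padic_monomial_no_solution (p : ℕ) [Fact p.Prime] (hp : 3 ≤ p)
    (k : ℕ) (hk : 1 ≤ k) (a : ℚ_[p]) (ha : ‖a - 1‖ < 1)
    (hka : ‖(k : ℚ_[p])‖ ≤ ‖a - 1‖) :
    ¬ ∃ x : ℚ_[p], x ^ k = a :=
  padic_monomial_no_solution_general p k hk a ha hka
end

section
/- Let p ≥ 3 be prime, k ≥ 1, and a ∈ ℚ_p with |a - 1|_p < |k|_p. Then the number of solutions x ∈ ℚ_p of x^k = a equals the number of residues ξ ∈ {1,...,p-1} with ξ^k ≡ 1 (mod p), which equals gcd(k, p-1). -/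
/-!
For odd `p` and `‖t‖ < 1`, every term of the binomial expansion of `(1 + t) ^ k - 1` beyond
`k * t` is strictly smaller than `‖k‖ * ‖t‖`, so `‖(1 + t) ^ k - 1‖ = ‖k‖ * ‖t‖`. Hence
`x ↦ x ^ k` is injective on each residue ball `‖x - ξ‖ < 1` of a unit `ξ`, and (Hensel's lemma,
with an induction on the `p`-adic valuation of `k`) it maps the ball around `1` onto
`‖b - 1‖ < ‖k‖`. Multiplying a root near `1` by the Teichmüller lift of a residue `ξ` with
`ξ ^ k ≡ 1` gives a root in the ball of `ξ`, so there is exactly one root in each such ball and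
none elsewhere. These residues form the kernel of `u ↦ u ^ k` on the cyclic group `(ZMod p)ˣ` of
order `p - 1`, which has `gcd k (p - 1)` elements.
-/

open Finset

lemma ne_zero_of_norm_lt_norm_natCast {R : Type*} [SeminormedRing R] {x : R} {k : ℕ}
    (h : ‖x‖ < ‖(k : R)‖) : k ≠ 0 := by
  rintro rfl
  exact (norm_nonneg x).not_gt (by simpa using h)

namespace IsUltrametricDist

lemma norm_sub_lt_of_lt_of_lt {M : Type*} [SeminormedAddGroup M] [IsUltrametricDist M]
    {x y z : M} {r : ℝ} (hxy : ‖x - y‖ < r) (hyz : ‖y - z‖ < r) : ‖x - z‖ < r := by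
  have := norm_add_le_max (x - y) (y - z)
  rw [sub_add_sub_cancel] at this
  exact this.trans_lt (max_lt hxy hyz)

lemma norm_sum_lt_of_forall_lt {M ι : Type*} [SeminormedAddCommGroup M] [IsUltrametricDist M]
    {s : Finset ι} {f : ι → M} {C : ℝ} (hC : 0 < C) (h : ∀ i ∈ s, ‖f i‖ < C) :
    ‖∑ i ∈ s, f i‖ < C := by
  rcases s.eq_empty_or_nonempty with rfl | hs
  · simpa using hC
  · obtain ⟨i, hi, hle⟩ := exists_norm_finsetSum_le_of_nonempty hs f
    exact hle.trans_lt (h i hi)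

lemma norm_pow_sub_pow_le {R : Type*} [SeminormedCommRing R] [NormOneClass R]
    [IsUltrametricDist R] {x y : R} (hx : ‖x‖ ≤ 1) (hy : ‖y‖ ≤ 1) (n : ℕ) :
    ‖x ^ n - y ^ n‖ ≤ ‖x - y‖ := by
  have norm_pow_le_one {z : R} (hz : ‖z‖ ≤ 1) (m : ℕ) : ‖z ^ m‖ ≤ 1 :=
    (_root_.norm_pow_le z m).trans (pow_le_one₀ (norm_nonneg z) hz)
  rw [← geom_sum₂_mul]
  refine (norm_mul_le _ _).trans (mul_le_of_le_one_left (norm_nonneg _) ?_)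
  refine norm_sum_le_of_forall_le_of_nonneg zero_le_one fun i _ => ?_
  exact (norm_mul_le _ _).trans
    (mul_le_one₀ (norm_pow_le_one hx _) (norm_nonneg _) (norm_pow_le_one hy _))

lemma norm_choose_mul_norm_le {K : Type*} [NormedField K] [IsUltrametricDist K] (n : ℕ) {j : ℕ}
    (hj : 0 < j) : ‖(n.choose j : K)‖ * ‖(j : K)‖ ≤ ‖(n : K)‖ := by
  obtain ⟨i, rfl⟩ := Nat.exists_eq_add_of_lt hj
  rcases n with _ | m
  · simp [Nat.choose_zero_succ]
  · have key : ((m + 1).choose (i + 1) : K) * ((i + 1 : ℕ) : K) =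
        ((m + 1 : ℕ) : K) * (m.choose i : K) := by
      rw [← Nat.cast_mul, ← Nat.cast_mul, Nat.add_one_mul_choose_eq]
    rw [zero_add, ← norm_mul, key, norm_mul]
    exact mul_le_of_le_one_right (norm_nonneg _) (norm_natCast_le_one K _)

end IsUltrametricDist

lemma Nat.mod_eq_one_iff_modEq {n p : ℕ} (hp : 1 < p) : n % p = 1 ↔ n ≡ 1 [MOD p] := by
  rw [Nat.ModEq, Nat.mod_eq_of_lt hp]

namespace Padic

open IsUltrametricDist

variable {p : ℕ} [hp : Fact p.Prime]

lemma norm_le_norm_p_mul_of_norm_lt {x y : ℚ_[p]} (h : ‖x‖ < ‖y‖) :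
    ‖x‖ ≤ ‖(p : ℚ_[p])‖ * ‖y‖ := by
  have hy : y ≠ 0 := norm_pos_iff.mp ((norm_nonneg x).trans_lt h)
  have hxy : ‖x / y‖ < (p : ℝ) ^ ((-1 : ℤ) + 1) := by
    rwa [neg_add_cancel, zpow_zero, norm_div, div_lt_one (norm_pos_iff.mpr hy)]
  rwa [← norm_le_pow_iff_norm_lt_pow_add_one, zpow_neg_one, ← norm_p, norm_div,
    div_le_iff₀ (norm_pos_iff.mpr hy)] at hxy

lemma norm_natCast_sub_natCast_lt_one_iff {m n : ℕ} :
    ‖(m : ℚ_[p]) - n‖ < 1 ↔ m ≡ n [MOD p] := by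
  rw [← Int.cast_natCast m, ← Int.cast_natCast n, ← Int.cast_sub, norm_intCast_lt_one_iff,
    ← dvd_neg, neg_sub, ← Nat.modEq_iff_dvd, Nat.ModEq.comm]

lemma exists_natCast_lt_norm_sub_lt_one {x : ℚ_[p]} (hx : ‖x‖ ≤ 1) :
    ∃ n < p, ‖x - n‖ < 1 := by
  obtain ⟨n, hn, hmem⟩ := PadicInt.exists_mem_range ⟨x, hx⟩
  rw [IsLocalRing.mem_maximalIdeal, PadicInt.mem_nonunits] at hmem
  exact ⟨n, hn, hmem⟩

lemma pow_sub_one_lt_norm_natCast (hp3 : 3 ≤ p) {j : ℕ} (hj : 2 ≤ j) {t : ℚ_[p]}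
    (ht : ‖t‖ < 1) : ‖t‖ ^ (j - 1) < ‖(j : ℚ_[p])‖ := by
  have hpj : j < p ^ (j - 1) := calc
    j ≤ 2 ^ (j - 1) := by have := @Nat.lt_two_pow_self (j - 1); omega
    _ < p ^ (j - 1) := Nat.pow_lt_pow_left (by omega) (by omega)
  have ht' : ‖t‖ ≤ (p : ℝ)⁻¹ := by
    simpa only [norm_one, mul_one, norm_p] using
      norm_le_norm_p_mul_of_norm_lt (x := t) (y := 1) (by rwa [norm_one])
  by_contra! hle
  have hnorm : ‖((j : ℤ) : ℚ_[p])‖ ≤ (p : ℝ) ^ (-((j - 1 : ℕ) : ℤ)) := calc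
    ‖((j : ℤ) : ℚ_[p])‖ = ‖(j : ℚ_[p])‖ := by norm_cast
    _ ≤ ‖t‖ ^ (j - 1) := hle
    _ ≤ (p : ℝ)⁻¹ ^ (j - 1) := pow_le_pow_left₀ (norm_nonneg t) ht' _
    _ = _ := by rw [zpow_neg, zpow_natCast, inv_pow]
  rw [norm_int_le_pow_iff_dvd] at hnorm
  exact absurd (Nat.le_of_dvd (by omega) (by exact_mod_cast hnorm)) (not_le.mpr hpj)

lemma norm_pow_sub_one_sub_mul_lt (hp3 : 3 ≤ p) {k : ℕ} (hk : k ≠ 0) {x : ℚ_[p]}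
    (hx : ‖x - 1‖ < 1) (hx1 : x ≠ 1) :
    ‖x ^ k - 1 - k * (x - 1)‖ < ‖(k : ℚ_[p])‖ * ‖x - 1‖ := by
  obtain ⟨n, rfl⟩ := Nat.exists_eq_add_one_of_ne_zero hk
  set t := x - 1
  have ht0 : 0 < ‖t‖ := norm_pos_iff.mpr (sub_ne_zero.mpr hx1)
  have hk0 : 0 < ‖((n + 1 : ℕ) : ℚ_[p])‖ := norm_pos_iff.mpr (Nat.cast_ne_zero.mpr hk)
  have hexpand : x ^ (n + 1) - 1 - (n + 1 : ℕ) * t =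
      ∑ i ∈ range n, t ^ (i + 2) * ((n + 1).choose (i + 2) : ℚ_[p]) := by
    rw [show x = t + 1 by ring, add_pow, sum_range_succ', sum_range_succ']
    simp only [one_pow, mul_one, Nat.choose_zero_right, Nat.choose_one_right, pow_zero,
      Nat.cast_one, zero_add, pow_one]
    ring
  rw [hexpand]
  refine norm_sum_lt_of_forall_lt (by positivity) fun i hi => ?_
  have hchoose : 0 < ‖((n + 1).choose (i + 2) : ℚ_[p])‖ := by
    rw [norm_pos_iff, Nat.cast_ne_zero, ← Nat.pos_iff_ne_zero]
    exact Nat.choose_pos (by rw [mem_range] at hi; omega)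
  calc ‖t ^ (i + 2) * ((n + 1).choose (i + 2) : ℚ_[p])‖
      = ‖((n + 1).choose (i + 2) : ℚ_[p])‖ * ‖t‖ ^ (i + 1) * ‖t‖ := by
        rw [norm_mul, norm_pow, pow_succ]; ring
    _ < ‖((n + 1).choose (i + 2) : ℚ_[p])‖ * ‖((i + 2 : ℕ) : ℚ_[p])‖ * ‖t‖ := by
        gcongr
        simpa using pow_sub_one_lt_norm_natCast hp3 (j := i + 2) (by omega) hx
    _ ≤ ‖((n + 1 : ℕ) : ℚ_[p])‖ * ‖t‖ := by
        gcongr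
        exact norm_choose_mul_norm_le (n + 1) (by omega)

lemma norm_pow_sub_one (hp3 : 3 ≤ p) (k : ℕ) {x : ℚ_[p]} (hx : ‖x - 1‖ < 1) :
    ‖x ^ k - 1‖ = ‖(k : ℚ_[p])‖ * ‖x - 1‖ := by
  rcases eq_or_ne k 0 with rfl | hk
  · simp
  rcases eq_or_ne x 1 with rfl | hx1
  · simp
  rw [← norm_mul]
  refine norm_eq_of_norm_sub_lt_right ?_
  rw [norm_mul]
  exact norm_pow_sub_one_sub_mul_lt hp3 hk hx hx1

lemma eq_of_pow_eq_pow (hp3 : 3 ≤ p) {k : ℕ} (hk : k ≠ 0) {x y : ℚ_[p]} (hy : ‖y‖ = 1)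
    (hxy : ‖x - y‖ < 1) (h : x ^ k = y ^ k) : x = y := by
  have hy0 : y ≠ 0 := norm_ne_zero_iff.mp (by rw [hy]; exact one_ne_zero)
  have hquot : ‖x / y - 1‖ < 1 := by
    rwa [← div_self hy0, ← sub_div, norm_div, hy, div_one]
  have hzero := norm_pow_sub_one hp3 k hquot
  rw [div_pow, h, div_self (pow_ne_zero k hy0), sub_self, norm_zero, eq_comm,
    mul_eq_zero, norm_eq_zero, norm_eq_zero, Nat.cast_eq_zero, sub_eq_zero,
    div_eq_one_iff_eq hy0] at hzero
  exact hzero.resolve_left hk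

open Polynomial in
lemma exists_pow_eq_of_norm_pow_sub_lt {n : ℕ} {b x₀ : ℚ_[p]} (hx₀ : ‖x₀‖ = 1)
    (h : ‖x₀ ^ n - b‖ < ‖(n : ℚ_[p])‖ ^ 2) :
    ∃ x, x ^ n = b ∧ ‖x - x₀‖ < ‖(n : ℚ_[p])‖ := by
  have hn : ‖(n : ℚ_[p])‖ ^ 2 ≤ 1 := pow_le_one₀ (norm_nonneg _) (norm_natCast_le_one _ n)
  have hb : ‖b‖ ≤ 1 := by
    have := norm_add_le_max (x₀ ^ n) (-(x₀ ^ n - b))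
    rw [← sub_eq_add_neg, sub_sub_cancel, norm_neg, norm_pow, hx₀, one_pow] at this
    exact this.trans (max_le le_rfl (h.le.trans hn))
  set X₀ : ℤ_[p] := ⟨x₀, hx₀.le⟩
  set B : ℤ_[p] := ⟨b, hb⟩
  have hderiv : ‖aeval X₀ (derivative (X ^ n - C B))‖ = ‖(n : ℚ_[p])‖ := by
    have hX₀ : ‖X₀‖ = 1 := hx₀
    simp only [derivative_sub, derivative_X_pow, derivative_C, sub_zero, map_mul, map_pow,
      aeval_X, aeval_C, Algebra.algebraMap_self, RingHom.id_apply, norm_mul, norm_pow, hX₀,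
      one_pow, mul_one]
    rw [PadicInt.norm_def, PadicInt.coe_natCast]
  obtain ⟨z, hz, hzX₀, -⟩ := hensels_lemma (F := X ^ n - C B) (a := X₀) (by
    rw [hderiv]
    simp only [map_sub, map_pow, aeval_X, aeval_C, Algebra.algebraMap_self, RingHom.id_apply]
    exact h)
  refine ⟨z, ?_, hzX₀.trans_eq hderiv⟩
  simpa [sub_eq_zero] using congrArg ((↑) : ℤ_[p] → ℚ_[p]) hz

/-- Hensel's lemma started at `1 + (b - 1) / n`, the first-order approximation of `b ^ (1 / n)`,
where the binomial error term is smaller than `‖b - 1‖`. -/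
lemma exists_pow_eq_of_norm_sub_one_le_sq (hp3 : 3 ≤ p) {n : ℕ} {b : ℚ_[p]}
    (hb : ‖b - 1‖ < ‖(n : ℚ_[p])‖) (hb' : ‖b - 1‖ ≤ ‖(n : ℚ_[p])‖ ^ 2) :
    ∃ x, x ^ n = b ∧ ‖x - 1‖ < 1 := by
  rcases eq_or_ne b 1 with rfl | hb1
  · exact ⟨1, one_pow n, by simp⟩
  have hn0 : 0 < ‖(n : ℚ_[p])‖ := (norm_nonneg _).trans_lt hb
  have hn : (n : ℚ_[p]) ≠ 0 := norm_pos_iff.mp hn0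
  set x₀ := 1 + (b - 1) / n with hx₀
  have hx₀1 : ‖x₀ - 1‖ = ‖b - 1‖ / ‖(n : ℚ_[p])‖ := by
    rw [hx₀, add_sub_cancel_left, norm_div]
  have hx₀1' : ‖x₀ - 1‖ < 1 := by rwa [hx₀1, div_lt_one hn0]
  have hx₀norm : ‖x₀‖ = 1 := by
    simpa using norm_eq_of_norm_sub_lt_right (z2 := (1 : ℚ_[p])) (by simpa using hx₀1')
  have hnewton : x₀ ^ n - b = x₀ ^ n - 1 - n * (x₀ - 1) := by
    rw [hx₀, add_sub_cancel_left, mul_div_cancel₀ _ hn]; ring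
  obtain ⟨x, hxb, hxx₀⟩ := exists_pow_eq_of_norm_pow_sub_lt hx₀norm (n := n) (b := b) (by
    rw [hnewton]
    calc _ < ‖(n : ℚ_[p])‖ * ‖x₀ - 1‖ :=
          norm_pow_sub_one_sub_mul_lt hp3 (Nat.cast_ne_zero.mp hn) hx₀1'
            (by simp [hx₀, sub_eq_zero, hb1, hn])
      _ = ‖b - 1‖ := by rw [hx₀1, mul_div_cancel₀ _ hn0.ne']
      _ ≤ _ := hb')
  exact ⟨x, hxb, norm_sub_lt_of_lt_of_lt (hxx₀.trans_le (norm_natCast_le_one _ n)) hx₀1'⟩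

lemma exists_pow_eq_of_norm_sub_one_lt (hp3 : 3 ≤ p) {k : ℕ} {b : ℚ_[p]}
    (hb : ‖b - 1‖ < ‖(k : ℚ_[p])‖) : ∃ x, x ^ k = b ∧ ‖x - 1‖ < 1 := by
  induction k using Nat.strong_induction_on generalizing b with
  | _ k ih =>
  by_cases hpk : p ∣ k
  · obtain ⟨m, rfl⟩ := hpk
    have hm : m ≠ 0 := right_ne_zero_of_mul (ne_zero_of_norm_lt_norm_natCast hb)
    have hnorm : ‖((p * m : ℕ) : ℚ_[p])‖ = ‖(p : ℚ_[p])‖ * ‖(m : ℚ_[p])‖ := by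
      rw [Nat.cast_mul, norm_mul]
    obtain ⟨y, hyb, hy1⟩ := ih m (lt_mul_left (Nat.pos_of_ne_zero hm) hp.out.one_lt)
      (hb.trans_le (by rw [hnorm]; exact mul_le_of_le_one_left (norm_nonneg _) norm_p_lt_one.le))
    -- `‖b - 1‖ = ‖m‖ * ‖y - 1‖`, so `y` is close enough to `1` to have a `p`-th root.
    have hy1p : ‖y - 1‖ < ‖(p : ℚ_[p])‖ := by
      have hmpos : 0 < ‖(m : ℚ_[p])‖ := norm_pos_iff.mpr (Nat.cast_ne_zero.mpr hm)
      rw [hnorm, ← hyb, norm_pow_sub_one hp3 m hy1, mul_comm] at hb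
      exact lt_of_mul_lt_mul_right hb hmpos.le
    obtain ⟨x, hxy, hx1⟩ := exists_pow_eq_of_norm_sub_one_le_sq hp3 hy1p
      (by simpa [sq] using norm_le_norm_p_mul_of_norm_lt hy1p)
    exact ⟨x, by rw [pow_mul, hxy, hyb], hx1⟩
  · have hk : ‖(k : ℚ_[p])‖ = 1 :=
      norm_natCast_eq_one_iff.mpr ((Nat.Prime.coprime_iff_not_dvd hp.out).mpr hpk)
    exact exists_pow_eq_of_norm_sub_one_le_sq hp3 hb (by rw [hk] at hb ⊢; simpa using hb.le)

lemma exists_pow_card_sub_one_eq_one {ξ : ℕ} (hξ : ¬ p ∣ ξ) :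
    ∃ z : ℚ_[p], z ^ (p - 1) = 1 ∧ ‖z - ξ‖ < 1 := by
  have hcop : ξ.Coprime p := ((Nat.Prime.coprime_iff_not_dvd hp.out).mpr hξ).symm
  have hfermat : ‖(ξ : ℚ_[p]) ^ (p - 1) - 1‖ < 1 := by
    have := Nat.ModEq.pow_totient hcop
    rw [Nat.totient_prime hp.out] at this
    exact_mod_cast norm_natCast_sub_natCast_lt_one_iff.mpr this
  obtain ⟨z, hz, hzξ⟩ := exists_pow_eq_of_norm_pow_sub_lt (n := p - 1) (b := 1)
    (norm_natCast_eq_one_iff.mpr hcop.symm) (by rwa [norm_natCast_p_sub_one, one_pow])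
  exact ⟨z, hz, hzξ.trans_eq norm_natCast_p_sub_one⟩

lemma exists_pow_eq_norm_sub_natCast_lt_one (hp3 : 3 ≤ p) {k ξ : ℕ} {a : ℚ_[p]}
    (ha : ‖a - 1‖ < ‖(k : ℚ_[p])‖) (hξ : ξ ^ k ≡ 1 [MOD p]) :
    ∃ x, x ^ k = a ∧ ‖x - ξ‖ < 1 := by
  have hk := ne_zero_of_norm_lt_norm_natCast ha
  have hξp : ¬ p ∣ ξ := by
    intro hdvd
    have h0 : ξ ^ k ≡ 0 [MOD p] := Nat.modEq_zero_iff_dvd.mpr (dvd_pow hdvd hk)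
    exact hp.out.one_lt.ne' (Nat.dvd_one.mp (Nat.modEq_zero_iff_dvd.mp (hξ.symm.trans h0)))
  obtain ⟨z, hz, hzξ⟩ := exists_pow_card_sub_one_eq_one hξp
  have hξnorm : ‖(ξ : ℚ_[p])‖ = 1 :=
    norm_natCast_eq_one_iff.mpr ((Nat.Prime.coprime_iff_not_dvd hp.out).mpr hξp)
  have hznorm : ‖z‖ = 1 :=
    (norm_eq_of_norm_sub_lt_right (hzξ.trans_eq hξnorm.symm)).trans hξnorm
  -- `z ^ k` is a `(p - 1)`-th root of unity in the residue ball of `1`.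
  have hzk : z ^ k = 1 := by
    refine eq_of_pow_eq_pow hp3 (k := p - 1) (by have := hp.out.two_le; omega) norm_one ?_
      (by rw [← pow_mul, mul_comm, pow_mul, hz, one_pow, one_pow])
    refine norm_sub_lt_of_lt_of_lt (y := (ξ : ℚ_[p]) ^ k)
      ((norm_pow_sub_pow_le hznorm.le hξnorm.le k).trans_lt hzξ) ?_
    exact_mod_cast norm_natCast_sub_natCast_lt_one_iff.mpr hξ
  obtain ⟨x₀, hx₀, hx₀1⟩ := exists_pow_eq_of_norm_sub_one_lt hp3 ha
  refine ⟨z * x₀, by rw [mul_pow, hzk, hx₀, one_mul], norm_sub_lt_of_lt_of_lt ?_ hzξ⟩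
  rwa [← mul_sub_one, norm_mul, hznorm, one_mul]

lemma norm_eq_one_of_pow_eq {k : ℕ} {a x : ℚ_[p]} (ha : ‖a - 1‖ < ‖(k : ℚ_[p])‖)
    (hx : x ^ k = a) : ‖x‖ = 1 := by
  have ha1 : ‖a - 1‖ < ‖(1 : ℚ_[p])‖ := by
    rw [norm_one]; exact ha.trans_le (norm_natCast_le_one _ k)
  rw [← pow_eq_one_iff_of_nonneg (norm_nonneg x) (ne_zero_of_norm_lt_norm_natCast ha),
    ← norm_pow, hx, norm_eq_of_norm_sub_lt_right ha1, norm_one]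

lemma exists_natCast_modEq_norm_sub_lt_one {k : ℕ} {a x : ℚ_[p]}
    (ha : ‖a - 1‖ < ‖(k : ℚ_[p])‖) (hx : x ^ k = a) :
    ∃ ξ, 1 ≤ ξ ∧ ξ < p ∧ ξ ^ k ≡ 1 [MOD p] ∧ ‖x - ξ‖ < 1 := by
  have hxnorm := norm_eq_one_of_pow_eq ha hx
  obtain ⟨ξ, hξp, hxξ⟩ := exists_natCast_lt_norm_sub_lt_one hxnorm.le
  have hξk : ‖(ξ : ℚ_[p]) ^ k - 1‖ < 1 := by
    refine norm_sub_lt_of_lt_of_lt (y := x ^ k) ?_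
      (by rw [hx]; exact ha.trans_le (norm_natCast_le_one _ k))
    refine (norm_pow_sub_pow_le (norm_natCast_le_one _ ξ) hxnorm.le k).trans_lt ?_
    rwa [norm_sub_rev]
  have hξ0 : ξ ≠ 0 := by
    rintro rfl
    simp [ne_zero_of_norm_lt_norm_natCast ha] at hξk
  exact ⟨ξ, Nat.one_le_iff_ne_zero.mpr hξ0, hξp,
    norm_natCast_sub_natCast_lt_one_iff.mp (by exact_mod_cast hξk), hxξ⟩

lemma ncard_setOf_pow_eq (hp3 : 3 ≤ p) {k : ℕ} {a : ℚ_[p]} (ha : ‖a - 1‖ < ‖(k : ℚ_[p])‖) :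
    {x : ℚ_[p] | x ^ k = a}.ncard = #{ξ ∈ Icc 1 (p - 1) | ξ ^ k % p = 1} := by
  have hk := ne_zero_of_norm_lt_norm_natCast ha
  have hmem {ξ : ℕ} : ξ ∈ ({ξ ∈ Icc 1 (p - 1) | ξ ^ k % p = 1} : Finset ℕ) ↔
      (1 ≤ ξ ∧ ξ ≤ p - 1) ∧ ξ ^ k ≡ 1 [MOD p] := by
    rw [mem_filter, mem_Icc, Nat.mod_eq_one_iff_modEq hp.out.one_lt]
  choose g hg using fun ξ (hξ : ξ ∈ ({ξ ∈ Icc 1 (p - 1) | ξ ^ k % p = 1} : Finset ℕ)) =>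
    exists_pow_eq_norm_sub_natCast_lt_one hp3 ha (hmem.mp hξ).2
  rw [← Set.ncard_coe_finset]
  refine (Set.ncard_congr g (fun ξ hξ => (hg ξ hξ).1) ?_ ?_).symm
  · intro ξ₁ ξ₂ hξ₁ hξ₂ hg12
    have h12 : ‖(ξ₁ : ℚ_[p]) - ξ₂‖ < 1 := by
      refine norm_sub_lt_of_lt_of_lt (y := g ξ₁ hξ₁) ?_ ?_
      · rw [norm_sub_rev]; exact (hg ξ₁ hξ₁).2
      · rw [hg12]; exact (hg ξ₂ hξ₂).2
    have := hmem.mp hξ₁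
    have := hmem.mp hξ₂
    exact (norm_natCast_sub_natCast_lt_one_iff.mp h12).eq_of_lt_of_lt (by omega) (by omega)
  · intro x (hx : x ^ k = a)
    obtain ⟨ξ, hξ0, hξp, hξk, hxξ⟩ := exists_natCast_modEq_norm_sub_lt_one ha hx
    have hξS : ξ ∈ ({ξ ∈ Icc 1 (p - 1) | ξ ^ k % p = 1} : Finset ℕ) :=
      hmem.mpr ⟨⟨hξ0, by omega⟩, hξk⟩
    refine ⟨ξ, hξS, eq_of_pow_eq_pow hp3 hk (norm_eq_one_of_pow_eq ha hx) ?_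
      ((hg ξ hξS).1.trans hx.symm)⟩
    exact norm_sub_lt_of_lt_of_lt (hg ξ hξS).2 (by rwa [norm_sub_rev])

end Padic

lemma ZMod.natCast_pow_eq_one_iff {p : ℕ} (hp : 1 < p) (ξ k : ℕ) :
    (ξ : ZMod p) ^ k = 1 ↔ ξ ^ k % p = 1 := by
  rw [← Nat.cast_pow, ← Nat.cast_one, ZMod.natCast_eq_natCast_iff', Nat.mod_eq_of_lt hp]

lemma card_filter_pow_mod_eq_one (p : ℕ) [hp : Fact p.Prime] (k : ℕ) :
    #{ξ ∈ Icc 1 (p - 1) | ξ ^ k % p = 1} = k.gcd (p - 1) := by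
  have hroots : #{u : (ZMod p)ˣ | u ^ k = 1} = #{ξ ∈ Icc 1 (p - 1) | ξ ^ k % p = 1} := by
    refine card_bij (fun u _ => (u : ZMod p).val) (fun u hu => ?_)
      (fun u _ v _ huv => Units.ext (ZMod.val_injective p huv)) (fun ξ hξ => ?_)
    · rw [mem_filter_univ] at hu
      have hval := ZMod.val_lt (u : ZMod p)
      have hpos := (ZMod.val_pos (n := p)).mpr u.ne_zero
      rw [mem_filter, mem_Icc, ← ZMod.natCast_pow_eq_one_iff hp.out.one_lt, ZMod.natCast_val,
        ZMod.cast_id', id, ← Units.val_pow_eq_pow_val, hu, Units.val_one]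
      exact ⟨⟨hpos, by omega⟩, rfl⟩
    · rw [mem_filter, mem_Icc, ← ZMod.natCast_pow_eq_one_iff hp.out.one_lt] at hξ
      have hval : (ξ : ZMod p).val = ξ := ZMod.val_cast_of_lt (by omega)
      have hne : (ξ : ZMod p) ≠ 0 := fun h => by rw [h, ZMod.val_zero] at hval; omega
      refine ⟨Units.mk0 _ hne, ?_, hval⟩
      rw [mem_filter_univ]
      exact Units.ext (by simpa using hξ.2)
  calc #{ξ ∈ Icc 1 (p - 1) | ξ ^ k % p = 1} = #{u : (ZMod p)ˣ | u ^ k = 1} := hroots.symm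
    _ = Nat.card (powMonoidHom k : (ZMod p)ˣ →* (ZMod p)ˣ).ker := by
      simp [Nat.card_eq_fintype_card, Fintype.card_subtype, MonoidHom.mem_ker]
    _ = k.gcd (p - 1) := by
      rw [IsCyclic.card_powMonoidHom_ker, Nat.card_eq_fintype_card, ZMod.card_units, Nat.gcd_comm]

theorem padic_monomial_count_general (p : ℕ) [Fact p.Prime] (hp : 3 ≤ p)
    (k : ℕ) (a : ℚ_[p]) (ha : ‖a - 1‖ < ‖(k : ℚ_[p])‖) :
    {x : ℚ_[p] | x ^ k = a}.ncard =
        ((Finset.Icc 1 (p - 1)).filter (fun ξ => ξ ^ k % p = 1)).card ∧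
      ((Finset.Icc 1 (p - 1)).filter (fun ξ => ξ ^ k % p = 1)).card =
        Nat.gcd k (p - 1) :=
  ⟨Padic.ncard_setOf_pow_eq hp ha, card_filter_pow_mod_eq_one p k⟩

theorem padic_monomial_count (p : ℕ) [Fact p.Prime] (hp : 3 ≤ p)
    (k : ℕ) (hk : 1 ≤ k) (a : ℚ_[p]) (ha : ‖a - 1‖ < ‖(k : ℚ_[p])‖) :
    {x : ℚ_[p] | x ^ k = a}.ncard =
        ((Finset.Icc 1 (p - 1)).filter (fun ξ => ξ ^ k % p = 1)).card ∧
      ((Finset.Icc 1 (p - 1)).filter (fun ξ => ξ ^ k % p = 1)).card =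
        Nat.gcd k (p - 1) :=
  padic_monomial_count_general p hp k a ha
end

section
/- Let p ≥ 3 be prime, k = m·p^s with gcd(m,p)=1, s ≥ 0, and a ∈ ℤ_p^* with first digit a₀. If every ξ ∈ {1,...,p-1} satisfies |ξ^k - a|_p = 1 (i.e. x^k ≡ a mod p has no solution), then for every ε ∈ ℚ_p with |ε|_p < |k|_p^2 and every p^s-Lipschitz function f: ℤ_p → ℤ_p, the function F(x) = x^k - a + ε·f(x) has no root in ℤ_p. -/
/-!
Every `x ∈ ℤ_p` is congruent mod `p` to a digit `ξ < p`, so `x ^ k ≡ ξ ^ k`; the hypothesis on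
the digits (with `ξ = 0` covered by `‖a‖ = 1`) and the ultrametric inequality give
`‖x ^ k - a‖ = 1` on all of `ℤ_p`. A root would instead force `‖x ^ k - a‖ = ‖ε f x‖ ≤ ‖ε‖ < 1`,
since `‖k‖ ≤ 1`.
-/

namespace PadicInt

variable {p : ℕ} [Fact p.Prime]

theorem norm_pow_sub_pow_le (x y : ℤ_[p]) (k : ℕ) : ‖x ^ k - y ^ k‖ ≤ ‖x - y‖ := by
  obtain ⟨c, hc⟩ := sub_dvd_pow_sub_pow x y k
  rw [hc, norm_mul]
  exact mul_le_of_le_one_right (norm_nonneg _) (norm_le_one c)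

theorem exists_lt_norm_sub_natCast_lt_one (x : ℤ_[p]) : ∃ ξ : ℕ, ξ < p ∧ ‖x - ξ‖ < 1 := by
  obtain ⟨ξ, hξp, hmem⟩ := exists_mem_range x
  exact ⟨ξ, hξp, mem_nonunits.mp hmem⟩

end PadicInt

namespace Padic

variable {p : ℕ} [Fact p.Prime]

theorem norm_pow_sub_eq_one {k : ℕ} {a : ℚ_[p]}
    (hdigits : ∀ ξ : ℕ, ξ < p → ‖(ξ : ℚ_[p]) ^ k - a‖ = 1) {x : ℚ_[p]} (hx : ‖x‖ ≤ 1) :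
    ‖x ^ k - a‖ = 1 := by
  set z : ℤ_[p] := ⟨x, hx⟩
  obtain ⟨ξ, hξp, hzξ⟩ := PadicInt.exists_lt_norm_sub_natCast_lt_one z
  have hlt : ‖x ^ k - (ξ : ℚ_[p]) ^ k‖ < ‖(ξ : ℚ_[p]) ^ k - a‖ := by
    rw [hdigits ξ hξp]
    have := (PadicInt.norm_pow_sub_pow_le z ξ k).trans_lt hzξ
    rwa [PadicInt.norm_def] at this
  rw [IsUltrametricDist.norm_sub_eq_max_of_norm_sub_ne_norm_sub _ _ _ hlt.ne,
    max_eq_right hlt.le, hdigits ξ hξp]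

end Padic

theorem padic_perturbed_no_root_general (p : ℕ) [Fact p.Prime]
    (k : ℕ)
    (a : ℚ_[p]) (ha : ‖a‖ = 1)
    (hnosol : ∀ ξ : ℕ, 1 ≤ ξ → ξ ≤ p - 1 → ‖(ξ : ℚ_[p]) ^ k - a‖ = 1)
    (ε : ℚ_[p]) (hε : ‖ε‖ < ‖(k : ℚ_[p])‖ ^ 2)
    (f : ℚ_[p] → ℚ_[p])
    (hf1 : ∀ x : ℚ_[p], ‖x‖ ≤ 1 → ‖f x‖ ≤ 1) :
    ¬ ∃ x : ℚ_[p], ‖x‖ ≤ 1 ∧ x ^ k - a + ε * f x = 0 := by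
  rintro ⟨x, hx, hroot⟩
  have hk : k ≠ 0 := by
    rintro rfl
    exact (norm_nonneg ε).not_gt (by simpa using hε)
  have hε1 : ‖ε‖ < 1 :=
    hε.trans_le <| pow_le_one₀ (norm_nonneg _) (by simpa using Padic.norm_int_le_one (p := p) k)
  have hdigits : ∀ ξ : ℕ, ξ < p → ‖(ξ : ℚ_[p]) ^ k - a‖ = 1 := by
    intro ξ hξp
    rcases Nat.eq_zero_or_pos ξ with rfl | hξ0
    · simp [zero_pow hk, ha]
    · exact hnosol ξ hξ0 (by omega)
  have hsmall : ‖x ^ k - a‖ < 1 := by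
    rw [eq_neg_of_add_eq_zero_left hroot, norm_neg, norm_mul]
    exact (mul_le_of_le_one_right (norm_nonneg _) (hf1 x hx)).trans_lt hε1
  exact hsmall.ne (Padic.norm_pow_sub_eq_one hdigits hx)

theorem padic_perturbed_no_root (p : ℕ) [Fact p.Prime] (hp : 3 ≤ p)
    (m s k : ℕ) (hm : Nat.Coprime m p) (hkdef : k = m * p ^ s)
    (a : ℚ_[p]) (ha : ‖a‖ = 1)
    (a₀ : ℕ) (ha₀ : 1 ≤ a₀) (ha₀' : a₀ ≤ p - 1)
    (hclose : ‖a - (a₀ : ℚ_[p])‖ < 1)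
    (hnosol : ∀ ξ : ℕ, 1 ≤ ξ → ξ ≤ p - 1 → ‖(ξ : ℚ_[p]) ^ k - a‖ = 1)
    (ε : ℚ_[p]) (hε : ‖ε‖ < ‖(k : ℚ_[p])‖ ^ 2)
    (f : ℚ_[p] → ℚ_[p])
    (hf1 : ∀ x : ℚ_[p], ‖x‖ ≤ 1 → ‖f x‖ ≤ 1)
    (hf2 : ∀ x y : ℚ_[p], ‖x‖ ≤ 1 → ‖y‖ ≤ 1 →
      ‖f x - f y‖ ≤ (p : ℝ) ^ s * ‖x - y‖) :
    ¬ ∃ x : ℚ_[p], ‖x‖ ≤ 1 ∧ x ^ k - a + ε * f x = 0 :=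
  padic_perturbed_no_root_general p k a ha hnosol ε hε f hf1
end

section
/- Let p ≥ 3 be prime, k = m·p^s with gcd(m,p)=1, s ≥ 0, a ∈ ℤ_p^* with first digit a₀ satisfying |a - a₀^{p^s}|_p < p^{-s}. Let f: ℤ_p → ℤ_p be p^s-Lipschitz and ε ∈ ℚ_p with |ε|_p < |k|_p^2. Then for every ξ ∈ {1,...,p-1} with |ξ^k - a|_p < 1, the function F(x) = x^k - a + ε·f(x) has exactly one root x ∈ ℤ_p with |x - ξ|_p < 1. -/
/-!
Newton's method with the derivative frozen at `ξ`: put `d = k ξ^(k-1)`, so `‖d‖ = ‖k‖ = p^(-s)`,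
and iterate `x ↦ x - F x / d` on the ball `‖x - ξ‖ ≤ p⁻¹`. In the binomial expansion of
`(y + h)^k` the coefficients satisfy `‖C(k, j)‖ p^(1-j) ≤ ‖k‖ / p` for `j ≥ 2` (since
`j C(k, j) = k C(k-1, j-1)` and `‖j‖ ≥ p^(2-j)` once `p ≥ 3`), so `x ↦ x^k` differs from its
linearisation at `ξ` by at most `‖k‖ / p` times the displacement; the perturbation `ε f` has
Lipschitz constant `‖ε‖ p^s < ‖k‖`, hence at most `‖k‖ / p` by discreteness of the norm. The map
is therefore a `1/p`-contraction. It maps the ball to itself because `ξ^k ≡ a mod p^(s+1)`: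
`ξ^m ≡ ξ^k ≡ a ≡ a₀ mod p` by Fermat, and raising a congruence mod `p` to the power `p^s`
upgrades it to one mod `p^(s+1)`.
-/

open Metric IsUltrametricDist

theorem norm_le_of_mem_closedBall_of_norm_le {E : Type*} [SeminormedAddCommGroup E]
    [IsUltrametricDist E] {x ξ : E} {r C : ℝ} (hx : x ∈ closedBall ξ r) (hr : r ≤ C)
    (hξ : ‖ξ‖ ≤ C) : ‖x‖ ≤ C := by
  rw [mem_closedBall, dist_eq_norm] at hx
  simpa using (norm_add_le_max (x - ξ) ξ).trans (max_le (hx.trans hr) hξ)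

theorem norm_pow_sub_pow_le_norm_sub {R : Type*} [NormedCommRing R] [NormOneClass R]
    [IsUltrametricDist R] {x y : R} (hx : ‖x‖ ≤ 1) (hy : ‖y‖ ≤ 1) (n : ℕ) :
    ‖x ^ n - y ^ n‖ ≤ ‖x - y‖ := by
  induction n with
  | zero => simp
  | succ n ih =>
    rw [show x ^ (n + 1) - y ^ (n + 1) = x * (x ^ n - y ^ n) + (x - y) * y ^ n by ring]
    have hyn : ‖y ^ n‖ ≤ 1 := (_root_.norm_pow_le y n).trans (pow_le_one₀ (norm_nonneg _) hy)
    refine (norm_add_le_max _ _).trans (max_le ?_ ?_)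
    · exact (norm_mul_le _ _).trans ((mul_le_of_le_one_left (norm_nonneg _) hx).trans ih)
    · exact (norm_mul_le _ _).trans (mul_le_of_le_one_right (norm_nonneg _) hyn)

theorem existsUnique_zero_mem_closedBall_of_norm_sub_sub_le
    {𝕜 : Type*} [NormedField 𝕜] [IsUltrametricDist 𝕜] [CompleteSpace 𝕜]
    {F : 𝕜 → 𝕜} {ξ d : 𝕜} {r q : ℝ} (hd : d ≠ 0) (hq : q < 1)
    (hFξ : ‖F ξ‖ ≤ ‖d‖ * r)
    (hF : ∀ x ∈ closedBall ξ r, ∀ y ∈ closedBall ξ r,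
      ‖F x - F y - d * (x - y)‖ ≤ q * ‖d‖ * ‖x - y‖) :
    ∃! x, x ∈ closedBall ξ r ∧ F x = 0 := by
  have hd' : 0 < ‖d‖ := norm_pos_iff.2 hd
  set T : 𝕜 → 𝕜 := fun x ↦ x - d⁻¹ * F x
  have hT : ∀ x ∈ closedBall ξ r, ∀ y ∈ closedBall ξ r, dist (T x) (T y) ≤ q * dist x y := by
    intro x hx y hy
    have e : T x - T y = -(d⁻¹ * (F x - F y - d * (x - y))) := by
      simp only [T]
      field_simp
      ring
    rw [dist_eq_norm, dist_eq_norm, e, norm_neg, norm_mul, norm_inv, inv_mul_le_iff₀ hd']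
    linarith [hF x hx y hy]
  have hξ : ξ ∈ closedBall ξ r :=
    mem_closedBall_self (nonneg_of_mul_nonneg_right ((norm_nonneg _).trans hFξ) hd')
  have hmaps : Set.MapsTo T (closedBall ξ r) (closedBall ξ r) := by
    intro x hx
    refine (IsUltrametricDist.dist_triangle_max _ (T ξ) _).trans (max_le ?_ ?_)
    · exact (hT x hx ξ hξ).trans ((mul_le_of_le_one_left dist_nonneg hq.le).trans hx)
    · rwa [dist_eq_norm, sub_sub_cancel_left, norm_neg, norm_mul, norm_inv, inv_mul_le_iff₀ hd']
  have hcontr : ContractingWith q.toNNReal (hmaps.restrict T _ _) := by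
    refine ⟨by simpa using hq, LipschitzWith.of_dist_le_mul fun x y ↦ ?_⟩
    exact (hT x x.2 y y.2).trans (mul_le_mul_of_nonneg_right (Real.le_coe_toNNReal q) dist_nonneg)
  obtain ⟨x, hx, hTx, -⟩ := hcontr.exists_fixedPoint' isClosed_closedBall.isComplete hmaps hξ
    (edist_ne_top _ _)
  have hFx : F x = 0 := by simpa [T, hd] using sub_eq_self.1 hTx
  refine ⟨x, ⟨hx, hFx⟩, fun y ⟨hy, hFy⟩ ↦ ?_⟩
  have h := hF y hy x hx
  rw [hFy, hFx, zero_sub_zero, zero_sub, norm_neg, norm_mul] at h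
  by_contra hyx
  have := mul_pos (mul_pos (sub_pos.2 hq) hd') (norm_pos_iff.2 (sub_ne_zero.2 hyx))
  linarith

namespace Padic

variable {p : ℕ} [Fact p.Prime]

theorem norm_le_norm_mul_inv_of_norm_lt {x y : ℚ_[p]} (h : ‖x‖ < ‖y‖) :
    ‖x‖ ≤ ‖y‖ * (p : ℝ)⁻¹ := by
  have hy : y ≠ 0 := by rintro rfl; exact (norm_nonneg x).not_gt (by simpa using h)
  rw [norm_eq_zpow_neg_valuation hy] at h ⊢
  rw [← zpow_neg_one, ← zpow_add₀ (by exact_mod_cast (Fact.out : p.Prime).ne_zero),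
    norm_le_pow_iff_norm_lt_pow_add_one, neg_add_cancel_right]
  exact h

theorem mem_closedBall_inv_iff_norm_sub_lt_one {x ξ : ℚ_[p]} :
    x ∈ closedBall ξ (p : ℝ)⁻¹ ↔ ‖x - ξ‖ < 1 := by
  rw [mem_closedBall_iff_norm]
  simpa using (norm_lt_pow_iff_norm_le_pow_sub_one (x - ξ) 0).symm

-- For `p = 2` this fails already at `j = 0`.
theorem inv_pow_le_norm_natCast_add_two (hp : 3 ≤ p) (j : ℕ) :
    (p : ℝ)⁻¹ ^ j ≤ ‖((j + 2 : ℕ) : ℚ_[p])‖ := by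
  by_contra! h
  rw [inv_pow, ← zpow_natCast, ← zpow_neg, norm_lt_pow_iff_norm_le_pow_sub_one,
    show -(j : ℤ) - 1 = -((j + 1 : ℕ) : ℤ) by push_cast; ring, ← Int.cast_natCast,
    norm_int_le_pow_iff_dvd] at h
  have hle : p ^ (j + 1) ≤ j + 2 := Nat.le_of_dvd (by omega) (by exact_mod_cast h)
  have h3 : 1 + (j + 1) * 2 ≤ 3 ^ (j + 1) := by
    have := one_add_mul_le_pow (a := (2 : ℤ)) (by norm_num) (j + 1)
    norm_num at this
    exact_mod_cast this
  have := Nat.pow_le_pow_left hp (j + 1)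
  omega

theorem norm_choose_add_two_mul_inv_pow_le (hp : 3 ≤ p) (n j : ℕ) :
    ‖(n.choose (j + 2) : ℚ_[p])‖ * (p : ℝ)⁻¹ ^ j ≤ ‖(n : ℚ_[p])‖ := by
  cases n with
  | zero => simp
  | succ n =>
    have hid : ((n + 1).choose (j + 2) * (j + 2 : ℕ) : ℚ_[p])
        = (n + 1 : ℕ) * n.choose (j + 1) := by
      exact_mod_cast (Nat.add_one_mul_choose_eq n (j + 1)).symm
    calc ‖((n + 1).choose (j + 2) : ℚ_[p])‖ * (p : ℝ)⁻¹ ^ j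
        ≤ ‖((n + 1).choose (j + 2) : ℚ_[p])‖ * ‖((j + 2 : ℕ) : ℚ_[p])‖ := by
          gcongr; exact inv_pow_le_norm_natCast_add_two hp j
      _ = ‖((n + 1 : ℕ) : ℚ_[p])‖ * ‖(n.choose (j + 1) : ℚ_[p])‖ := by
          rw [← norm_mul, ← norm_mul, hid]
      _ ≤ ‖((n + 1 : ℕ) : ℚ_[p])‖ :=
          mul_le_of_le_one_right (norm_nonneg _) (norm_natCast_le_one _ _)

theorem norm_add_pow_sub_pow_sub_le (hp : 3 ≤ p) {y h : ℚ_[p]} (hy : ‖y‖ ≤ 1)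
    (hh : ‖h‖ ≤ (p : ℝ)⁻¹) (n : ℕ) :
    ‖(y + h) ^ n - y ^ n - n * y ^ (n - 1) * h‖ ≤ ‖(n : ℚ_[p])‖ * (p : ℝ)⁻¹ * ‖h‖ := by
  have expand : (y + h) ^ n - y ^ n - n * y ^ (n - 1) * h
      = ∑ j ∈ Finset.range (n - 1), h ^ (j + 2) * y ^ (n - (j + 2)) * n.choose (j + 2) := by
    rcases n with _ | _ | n
    · simp
    · simp
    · rw [add_comm y h, add_pow, Finset.sum_range_succ', Finset.sum_range_succ']
      simp only [Nat.reduceSubDiff, zero_add, pow_one, add_tsub_cancel_right,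
        Nat.choose_one_right, Nat.cast_add, Nat.cast_one, pow_zero, tsub_zero, one_mul,
        Nat.choose_zero_right, mul_one, add_sub_cancel_right]
      ring
  rw [expand]
  refine norm_sum_le_of_forall_le_of_nonneg (by positivity) fun j _ ↦ ?_
  calc ‖h ^ (j + 2) * y ^ (n - (j + 2)) * n.choose (j + 2)‖
      = ‖(n.choose (j + 2) : ℚ_[p])‖ * ‖h‖ ^ (j + 1) * ‖h‖ * ‖y‖ ^ (n - (j + 2)) := by
        rw [norm_mul, norm_mul, norm_pow, norm_pow]; ring
    _ ≤ ‖(n.choose (j + 2) : ℚ_[p])‖ * ‖h‖ ^ (j + 1) * ‖h‖ :=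
        mul_le_of_le_one_right (by positivity) (pow_le_one₀ (norm_nonneg _) hy)
    _ ≤ ‖(n.choose (j + 2) : ℚ_[p])‖ * (p : ℝ)⁻¹ ^ j * (p : ℝ)⁻¹ * ‖h‖ := by
        rw [mul_assoc _ (_ ^ j), ← pow_succ]; gcongr
    _ ≤ ‖(n : ℚ_[p])‖ * (p : ℝ)⁻¹ * ‖h‖ := by
        gcongr; exact norm_choose_add_two_mul_inv_pow_le hp n j

theorem norm_pow_sub_pow_le_norm_natCast_mul (hp : 3 ≤ p) {x y : ℚ_[p]} (hy : ‖y‖ ≤ 1)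
    (hxy : ‖x - y‖ ≤ (p : ℝ)⁻¹) (n : ℕ) :
    ‖x ^ n - y ^ n‖ ≤ ‖(n : ℚ_[p])‖ * ‖x - y‖ := by
  have hp1 : (p : ℝ)⁻¹ ≤ 1 := inv_le_one_of_one_le₀ (by exact_mod_cast (by omega : 1 ≤ p))
  have hrem := norm_add_pow_sub_pow_sub_le hp hy hxy n
  rw [add_sub_cancel] at hrem
  have hlin : ‖(n : ℚ_[p]) * y ^ (n - 1) * (x - y)‖ ≤ ‖(n : ℚ_[p])‖ * ‖x - y‖ := by
    rw [norm_mul, norm_mul, norm_pow]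
    gcongr
    exact mul_le_of_le_one_right (norm_nonneg _) (pow_le_one₀ (norm_nonneg _) hy)
  rw [← sub_add_cancel (x ^ n - y ^ n) (n * y ^ (n - 1) * (x - y))]
  refine (norm_add_le_max _ _).trans (max_le ?_ hlin)
  exact hrem.trans (by gcongr; exact mul_le_of_le_one_right (norm_nonneg _) hp1)

theorem norm_pow_sub_pow_sub_mul_le (hp : 3 ≤ p) {ξ x y : ℚ_[p]} (hξ : ‖ξ‖ ≤ 1)
    (hx : x ∈ closedBall ξ (p : ℝ)⁻¹) (hy : y ∈ closedBall ξ (p : ℝ)⁻¹) (n : ℕ) :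
    ‖x ^ n - y ^ n - n * ξ ^ (n - 1) * (x - y)‖ ≤ ‖(n : ℚ_[p])‖ * (p : ℝ)⁻¹ * ‖x - y‖ := by
  have hp1 : (p : ℝ)⁻¹ ≤ 1 := inv_le_one_of_one_le₀ (by exact_mod_cast (by omega : 1 ≤ p))
  have hy1 : ‖y‖ ≤ 1 := norm_le_of_mem_closedBall_of_norm_le hy hp1 hξ
  have hxy : ‖x - y‖ ≤ (p : ℝ)⁻¹ := by
    rw [← dist_eq_norm]
    exact (IsUltrametricDist.dist_triangle_max x ξ y).trans (max_le hx (by rwa [dist_comm]))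
  have hrem := norm_add_pow_sub_pow_sub_le hp hy1 hxy n
  rw [add_sub_cancel] at hrem
  have hlin : ‖(n : ℚ_[p]) * (y ^ (n - 1) - ξ ^ (n - 1)) * (x - y)‖
      ≤ ‖(n : ℚ_[p])‖ * (p : ℝ)⁻¹ * ‖x - y‖ := by
    rw [norm_mul, norm_mul]
    gcongr
    exact (norm_pow_sub_pow_le_norm_sub hy1 hξ _).trans (mem_closedBall_iff_norm.1 hy)
  rw [show x ^ n - y ^ n - n * ξ ^ (n - 1) * (x - y)
    = (x ^ n - y ^ n - n * y ^ (n - 1) * (x - y)) + n * (y ^ (n - 1) - ξ ^ (n - 1)) * (x - y)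
    by ring]
  exact (norm_add_le_max _ _).trans (max_le hrem hlin)

theorem norm_natCast_pow_prime_pow_sub_lt_one (n s : ℕ) :
    ‖(n : ℚ_[p]) ^ p ^ s - n‖ < 1 := by
  have h : ((n ^ p ^ s - n : ℤ) : ZMod p) = 0 := by
    push_cast
    rw [ZMod.pow_card_pow, sub_self]
  exact_mod_cast norm_intCast_lt_one_iff.2 ((ZMod.intCast_zmod_eq_zero_iff_dvd _ p).1 h)

theorem norm_natCast_pow_mul_prime_pow_sub_le (hp : 3 ≤ p) {m s a₀ ξ : ℕ} {a : ℚ_[p]}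
    (hξa : ‖(ξ : ℚ_[p]) ^ (m * p ^ s) - a‖ < 1) (ha₀ : ‖a - a₀‖ < 1)
    (hcond : ‖a - (a₀ : ℚ_[p]) ^ p ^ s‖ < ‖(p : ℚ_[p]) ^ s‖) :
    ‖(ξ : ℚ_[p]) ^ (m * p ^ s) - a‖ ≤ ‖(p : ℚ_[p]) ^ s‖ * (p : ℝ)⁻¹ := by
  have hfrob := norm_natCast_pow_prime_pow_sub_lt_one (p := p) (ξ ^ m) s
  rw [Nat.cast_pow, ← pow_mul] at hfrob
  have hlt : ‖(ξ : ℚ_[p]) ^ m - a₀‖ < 1 := by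
    rw [show (ξ : ℚ_[p]) ^ m - a₀ = -((ξ : ℚ_[p]) ^ (m * p ^ s) - ξ ^ m)
      + (((ξ : ℚ_[p]) ^ (m * p ^ s) - a) + (a - a₀)) by ring]
    refine (norm_add_le_max _ _).trans_lt (max_lt (by rwa [norm_neg]) ?_)
    exact (norm_add_le_max _ _).trans_lt (max_lt hξa ha₀)
  have hpow : ‖(ξ : ℚ_[p]) ^ (m * p ^ s) - (a₀ : ℚ_[p]) ^ p ^ s‖
      ≤ ‖(p : ℚ_[p]) ^ s‖ * (p : ℝ)⁻¹ := by
    have hle := mem_closedBall_iff_norm.1 (mem_closedBall_inv_iff_norm_sub_lt_one.2 hlt)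
    rw [pow_mul]
    refine (norm_pow_sub_pow_le_norm_natCast_mul hp (norm_natCast_le_one _ _) hle _).trans ?_
    rw [Nat.cast_pow]
    gcongr
  rw [← sub_sub_sub_cancel_right _ a ((a₀ : ℚ_[p]) ^ p ^ s), sub_eq_add_neg]
  refine (norm_add_le_max _ _).trans (max_le hpow ?_)
  rw [norm_neg]
  exact norm_le_norm_mul_inv_of_norm_lt hcond

theorem existsUnique_pow_sub_add_mul_eq_zero (hp : 3 ≤ p) {n : ℕ} {a ε ξ : ℚ_[p]}
    {f : ℚ_[p] → ℚ_[p]} (hξ : ‖ξ‖ = 1) (hξa : ‖ξ ^ n - a‖ ≤ ‖(n : ℚ_[p])‖ * (p : ℝ)⁻¹)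
    (hε : ‖ε‖ < ‖(n : ℚ_[p])‖ ^ 2) (hfξ : ‖f ξ‖ ≤ 1)
    (hf : ∀ x ∈ closedBall ξ (p : ℝ)⁻¹, ∀ y ∈ closedBall ξ (p : ℝ)⁻¹,
      ‖f x - f y‖ ≤ ‖(n : ℚ_[p])‖⁻¹ * ‖x - y‖) :
    ∃! x, x ∈ closedBall ξ (p : ℝ)⁻¹ ∧ x ^ n - a + ε * f x = 0 := by
  have hn : 0 < ‖(n : ℚ_[p])‖ := by
    by_contra! h
    nlinarith [norm_nonneg ε, norm_nonneg (n : ℚ_[p])]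
  have hε' : ‖ε‖ ≤ ‖(n : ℚ_[p])‖ ^ 2 * (p : ℝ)⁻¹ := by
    rw [← norm_pow]
    exact norm_le_norm_mul_inv_of_norm_lt (by rwa [norm_pow])
  have hd : ‖(n : ℚ_[p]) * ξ ^ (n - 1)‖ = ‖(n : ℚ_[p])‖ := by simp [hξ]
  refine existsUnique_zero_mem_closedBall_of_norm_sub_sub_le (F := fun x ↦ x ^ n - a + ε * f x)
    (d := n * ξ ^ (n - 1)) (norm_pos_iff.1 (hd ▸ hn))
    (inv_lt_one_of_one_lt₀ (by exact_mod_cast (by omega : 1 < p) : (1 : ℝ) < p)) ?_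
    fun x hx y hy ↦ ?_
  · refine (norm_add_le_max _ _).trans (max_le (hd ▸ hξa) ?_)
    calc ‖ε * f ξ‖ ≤ ‖ε‖ := by
          rw [norm_mul]; exact mul_le_of_le_one_right (norm_nonneg _) hfξ
      _ ≤ ‖(n : ℚ_[p])‖ ^ 2 * (p : ℝ)⁻¹ := hε'
      _ ≤ _ := by
          rw [hd]; gcongr
          exact pow_le_of_le_one (norm_nonneg _) (norm_natCast_le_one _ _) two_ne_zero
  rw [show (x ^ n - a + ε * f x) - (y ^ n - a + ε * f y) - (n : ℚ_[p]) * ξ ^ (n - 1) * (x - y)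
    = (x ^ n - y ^ n - n * ξ ^ (n - 1) * (x - y)) + ε * (f x - f y) by ring, hd]
  refine (norm_add_le_max _ _).trans (max_le
    ((norm_pow_sub_pow_sub_mul_le hp hξ.le hx hy n).trans_eq (by ring)) ?_)
  calc ‖ε * (f x - f y)‖ ≤ ‖(n : ℚ_[p])‖ ^ 2 * (p : ℝ)⁻¹ * (‖(n : ℚ_[p])‖⁻¹ * ‖x - y‖) := by
        rw [norm_mul]; gcongr; exact hf x hx y hy
    _ = (p : ℝ)⁻¹ * ‖(n : ℚ_[p])‖ * ‖x - y‖ := by field_simp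

end Padic

theorem padic_perturbed_unique_root_in_ball_general (p : ℕ) [Fact p.Prime] (hp : 3 ≤ p)
    (m s k : ℕ) (hm : Nat.Coprime m p) (hkdef : k = m * p ^ s)
    (a : ℚ_[p])
    (a₀ : ℕ)
    (hclose : ‖a - (a₀ : ℚ_[p])‖ < 1)
    (hcond : ‖a - (a₀ : ℚ_[p]) ^ (p ^ s)‖ < (p : ℝ) ^ (-(s : ℤ)))
    (f : ℚ_[p] → ℚ_[p])
    (hf1 : ∀ x : ℚ_[p], ‖x‖ ≤ 1 → ‖f x‖ ≤ 1)
    (hf2 : ∀ x y : ℚ_[p], ‖x‖ ≤ 1 → ‖y‖ ≤ 1 →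
      ‖f x - f y‖ ≤ (p : ℝ) ^ s * ‖x - y‖)
    (ε : ℚ_[p]) (hε : ‖ε‖ < ‖(k : ℚ_[p])‖ ^ 2) :
    ∀ ξ : ℕ, 1 ≤ ξ → ξ ≤ p - 1 → ‖(ξ : ℚ_[p]) ^ k - a‖ < 1 →
      ∃! x : ℚ_[p], ‖x‖ ≤ 1 ∧ ‖x - (ξ : ℚ_[p])‖ < 1 ∧
        x ^ k - a + ε * f x = 0 := by
  intro ξ hξ1 hξp hξa
  have hk : ‖(k : ℚ_[p])‖ = ‖(p : ℚ_[p]) ^ s‖ := by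
    rw [hkdef, Nat.cast_mul, Nat.cast_pow, norm_mul, Padic.norm_natCast_eq_one_iff.2 hm.symm,
      one_mul]
  have hξ : ‖(ξ : ℚ_[p])‖ = 1 :=
    Padic.norm_natCast_eq_one_iff.2 (Nat.coprime_of_lt_prime (by omega) (by omega) Fact.out)
  have hball : ∀ x ∈ closedBall (ξ : ℚ_[p]) (p : ℝ)⁻¹, ‖x‖ ≤ 1 := fun x hx ↦
    norm_le_of_mem_closedBall_of_norm_le hx (inv_le_one_of_one_le₀ (by exact_mod_cast
      (by omega : 1 ≤ p))) hξ.le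
  have hξk : ‖(ξ : ℚ_[p]) ^ k - a‖ ≤ ‖(k : ℚ_[p])‖ * (p : ℝ)⁻¹ := by
    subst hkdef
    exact hk ▸ Padic.norm_natCast_pow_mul_prime_pow_sub_le hp hξa hclose
      (by rwa [Padic.norm_p_pow])
  have hf : ∀ x ∈ closedBall (ξ : ℚ_[p]) (p : ℝ)⁻¹, ∀ y ∈ closedBall (ξ : ℚ_[p]) (p : ℝ)⁻¹,
      ‖f x - f y‖ ≤ ‖(k : ℚ_[p])‖⁻¹ * ‖x - y‖ := fun x hx y hy ↦ by
    rw [hk, Padic.norm_p_pow, zpow_neg, inv_inv, zpow_natCast]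
    exact hf2 x y (hball x hx) (hball y hy)
  obtain ⟨x, ⟨hx, hFx⟩, huniq⟩ :=
    Padic.existsUnique_pow_sub_add_mul_eq_zero hp hξ hξk hε (hf1 _ hξ.le) hf
  refine ⟨x, ⟨hball x hx, Padic.mem_closedBall_inv_iff_norm_sub_lt_one.1 hx, hFx⟩, ?_⟩
  rintro y ⟨-, hy, hFy⟩
  exact huniq y ⟨Padic.mem_closedBall_inv_iff_norm_sub_lt_one.2 hy, hFy⟩

theorem padic_perturbed_unique_root_in_ball (p : ℕ) [Fact p.Prime] (hp : 3 ≤ p)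
    (m s k : ℕ) (hm : Nat.Coprime m p) (hkdef : k = m * p ^ s)
    (a : ℚ_[p]) (ha : ‖a‖ = 1)
    (a₀ : ℕ) (ha₀ : 1 ≤ a₀) (ha₀' : a₀ ≤ p - 1)
    (hclose : ‖a - (a₀ : ℚ_[p])‖ < 1)
    (hcond : ‖a - (a₀ : ℚ_[p]) ^ (p ^ s)‖ < (p : ℝ) ^ (-(s : ℤ)))
    (f : ℚ_[p] → ℚ_[p])
    (hf1 : ∀ x : ℚ_[p], ‖x‖ ≤ 1 → ‖f x‖ ≤ 1)
    (hf2 : ∀ x y : ℚ_[p], ‖x‖ ≤ 1 → ‖y‖ ≤ 1 →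
      ‖f x - f y‖ ≤ (p : ℝ) ^ s * ‖x - y‖)
    (ε : ℚ_[p]) (hε : ‖ε‖ < ‖(k : ℚ_[p])‖ ^ 2) :
    ∀ ξ : ℕ, 1 ≤ ξ → ξ ≤ p - 1 → ‖(ξ : ℚ_[p]) ^ k - a‖ < 1 →
      ∃! x : ℚ_[p], ‖x‖ ≤ 1 ∧ ‖x - (ξ : ℚ_[p])‖ < 1 ∧
        x ^ k - a + ε * f x = 0 :=
  padic_perturbed_unique_root_in_ball_general p hp m s k hm hkdef a a₀ hclose hcond f hf1 hf2 ε hε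
end

section
/- Let p ≥ 3 be prime and b, c, d ∈ ℚ_p with |b-1|_p < 1, |c-1|_p < 1, |d-1|_p < 1 and c ≠ bd. Define f(x) = ((bx - c)/(x - d))^k for an integer k ≥ 1. Then every fixed point x of f (i.e. x ≠ d and f(x) = x) satisfies |x - 1|_p < 1. -/
lemma aux_unit_norm {p : ℕ} [Fact p.Prime] {a : ℚ_[p]} (h : ‖a - 1‖ < 1) : ‖a‖ = 1 := by
  have ha : a = (a - 1) + 1 := by ring
  rw [ha, Padic.add_eq_max_of_ne (by rw [norm_one]; exact ne_of_lt h)]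
  rw [norm_one]
  exact max_eq_right h.le

lemma aux_pow_sub_one {p : ℕ} [Fact p.Prime] (y : ℚ_[p]) (hy : ‖y‖ ≤ 1) :
    ∀ k : ℕ, ‖y ^ k - 1‖ ≤ ‖y - 1‖ := by
  intro k
  induction k with
  | zero => simp
  | succ n ih =>
      have hrw : y ^ (n + 1) - 1 = y ^ n * (y - 1) + (y ^ n - 1) := by ring
      rw [hrw]
      refine le_trans (Padic.nonarchimedean _ _) (max_le ?_ ih)
      rw [norm_mul]
      calc ‖y ^ n‖ * ‖y - 1‖ ≤ 1 * ‖y - 1‖ := by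
            apply mul_le_mul_of_nonneg_right _ (norm_nonneg _)
            calc ‖y ^ n‖ = ‖y‖ ^ n := norm_pow _ _
              _ ≤ 1 := pow_le_one₀ (norm_nonneg _) hy
        _ = ‖y - 1‖ := one_mul _

theorem padic_fixed_points_in_Ep (p : ℕ) [Fact p.Prime] (hp : 3 ≤ p)
    (k : ℕ) (hk : 1 ≤ k) (b c d : ℚ_[p])
    (hb : ‖b - 1‖ < 1) (hc : ‖c - 1‖ < 1) (hd : ‖d - 1‖ < 1)
    (hcbd : c ≠ b * d)
    (x : ℚ_[p]) (hxd : x ≠ d)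
    (hfix : ((b * x - c) / (x - d)) ^ k = x) :
    ‖x - 1‖ < 1 := by
  have hb1 : ‖b‖ = 1 := aux_unit_norm hb
  have hc1 : ‖c‖ = 1 := aux_unit_norm hc
  have hd1 : ‖d‖ = 1 := aux_unit_norm hd
  have hxd' : x - d ≠ 0 := sub_ne_zero.mpr hxd
  by_contra hcon
  push_neg at hcon
  -- hcon : 1 ≤ ‖x - 1‖
  rcases le_or_gt ‖x‖ 1 with hx | hx
  · -- ‖x‖ ≤ 1, so ‖x - 1‖ = 1
    have hx1 : ‖x - 1‖ = 1 := by
      have : ‖x - 1‖ ≤ max ‖x‖ ‖(1 : ℚ_[p])‖ := by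
        simpa [sub_eq_add_neg] using Padic.nonarchimedean x (-1)
      rw [norm_one] at this
      exact le_antisymm (this.trans (max_le hx le_rfl)) hcon
    -- ‖x - d‖ = 1
    have hxdnorm : ‖x - d‖ = 1 := by
      have hrw : x - d = (x - 1) + -(d - 1) := by ring
      have hne : ‖x - 1‖ ≠ ‖-(d - 1)‖ := by
        rw [norm_neg, hx1]; exact (ne_of_lt hd).symm
      rw [hrw, Padic.add_eq_max_of_ne hne, norm_neg, hx1]
      exact max_eq_left hd.le
    set y := (b * x - c) / (x - d) with hy
    have hynum : y * (x - d) = b * x - c := div_mul_cancel₀ _ hxd'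
    have hy1 : ‖y - 1‖ < 1 := by
      have h2 : (y - 1) * (x - d) = (b - 1) * x + (d - 1) + -(c - 1) := by
        rw [sub_mul, hynum]; ring
      have : ‖y - 1‖ = ‖(b - 1) * x + (d - 1) + -(c - 1)‖ := by
        rw [← h2, norm_mul, hxdnorm, mul_one]
      rw [this]
      refine lt_of_le_of_lt (Padic.nonarchimedean _ _) (max_lt ?_ ?_)
      · refine lt_of_le_of_lt (Padic.nonarchimedean _ _) (max_lt ?_ hd)
        rw [norm_mul]
        calc ‖b - 1‖ * ‖x‖ ≤ ‖b - 1‖ * 1 :=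
              mul_le_mul_of_nonneg_left hx (norm_nonneg _)
          _ = ‖b - 1‖ := mul_one _
          _ < 1 := hb
      · rw [norm_neg]; exact hc
    have hyle : ‖y‖ ≤ 1 := by
      rw [aux_unit_norm hy1]
    have : ‖x - 1‖ < 1 := by
      rw [← hfix]
      exact lt_of_le_of_lt (aux_pow_sub_one y hyle k) hy1
    exact absurd this (not_lt.mpr hcon)
  · -- ‖x‖ > 1 : contradiction
    have hbx : ‖b * x‖ = ‖x‖ := by rw [norm_mul, hb1, one_mul]
    have hnum : ‖b * x - c‖ = ‖x‖ := by
      rw [sub_eq_add_neg, Padic.add_eq_max_of_ne]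
      · rw [norm_neg, hbx, hc1]; exact max_eq_left hx.le
      · rw [norm_neg, hbx, hc1]; exact ne_of_gt hx
    have hden : ‖x - d‖ = ‖x‖ := by
      rw [sub_eq_add_neg, Padic.add_eq_max_of_ne]
      · rw [norm_neg, hd1]; exact max_eq_left hx.le
      · rw [norm_neg, hd1]; exact ne_of_gt hx
    have hyn : ‖(b * x - c) / (x - d)‖ = 1 := by
      rw [norm_div, hnum, hden, div_self (by positivity)]
    have : ‖x‖ = 1 := by
      rw [← hfix, norm_pow, hyn, one_pow]
    rw [this] at hx
    exact lt_irrefl 1 hx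
end

section
/- Let p ≥ 3 be prime, k ≥ 1, and b, c, d ∈ ℚ_p with |b-1|_p < 1, |c-1|_p < 1, |d-1|_p < 1 and c ≠ bd. Define f(x) = ((bx-c)/(x-d))^k and g(y) = (b·y^k - c)/(y^k - d). Then the number of fixed points of f in ℚ_p equals the number of fixed points of g in ℚ_p. -/
theorem padic_fixed_point_bijection (p : ℕ) [Fact p.Prime] (hp : 3 ≤ p)
    (k : ℕ) (hk : 1 ≤ k) (b c d : ℚ_[p])
    (hb : ‖b - 1‖ < 1) (hc : ‖c - 1‖ < 1) (hd : ‖d - 1‖ < 1)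
    (hcbd : c ≠ b * d) :
    {x : ℚ_[p] | x ≠ d ∧ ((b * x - c) / (x - d)) ^ k = x}.ncard =
      {y : ℚ_[p] | y ^ k ≠ d ∧ (b * y ^ k - c) / (y ^ k - d) = y}.ncard := by
  have himg : {x : ℚ_[p] | x ≠ d ∧ ((b * x - c) / (x - d)) ^ k = x}
      = (fun y : ℚ_[p] => y ^ k) '' {y : ℚ_[p] | y ^ k ≠ d ∧ (b * y ^ k - c) / (y ^ k - d) = y} := by
    ext x
    constructor
    · rintro ⟨hxd, hfx⟩
      refine ⟨(b * x - c) / (x - d), ⟨?_, ?_⟩, hfx⟩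
      · rw [hfx]; exact hxd
      · rw [hfx]
    · rintro ⟨y, ⟨hyd, hgy⟩, rfl⟩
      refine ⟨hyd, ?_⟩
      rw [hgy]
  rw [himg]
  exact Set.ncard_image_of_injOn (fun y1 h1 y2 h2 heq => by
    simp only [Set.mem_setOf_eq] at h1 h2 heq
    rw [← h1.2, ← h2.2, heq])
end
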